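/- arXiv:1308.2715 — 10 statements merged into one kernel-verified Lean document; each statement's English description precedes it below -/
import Mathlib

section
/- Let p be a prime and let R be a ring whose additive group is a p-group. If R is left p-nil or right p-nil, then for every n ≥ 1 the set of elements of the adjoint group R∘ whose ∘-order divides p^n coincides with the subgroup Ω_n(R^+) = {x ∈ R : p^n·x = 0} of the additive group of R. In particular, in R∘ the subgroup Ω_n(R∘) generated by elements of order dividing p^n equals the set Ω_{n}(R∘) of such elements. -/
/-- The adjoint group `R∘` of a non-unital ring `R`: the group of invertible elements of the
monoid `(R, ∘)` where `x ∘ y = x + y + x * y`. -/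
abbrev AdjointGroup (R : Type*) [NonUnitalRing R] : Type _ := (PreQuasiregular R)ˣ

/-- A ring is left `p`-nil if every `x` with `p • x = 0` (`4 • x = 0` when `p = 2`) is a left
annihilator. -/
def IsLeftPNil (p : ℕ) (R : Type*) [NonUnitalRing R] : Prop :=
  ∀ x : R, (if p = 2 then 4 else p) • x = 0 → ∀ y : R, x * y = 0

/-- A ring is right `p`-nil if every `x` with `p • x = 0` (`4 • x = 0` when `p = 2`) is a right
annihilator. -/
def IsRightPNil (p : ℕ) (R : Type*) [NonUnitalRing R] : Prop :=
  ∀ x : R, (if p = 2 then 4 else p) • x = 0 → ∀ y : R, y * x = 0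

/-!
In the unitization `ℤ ⊕ R` the element `x ∘ y` becomes `(1 + x) * (1 + y)`, so the `∘`-powers
of `x` are read off from `(1 + x) ^ p ^ n = 1 + ∑_{i ≥ 1} C(p ^ n, i) x ^ i`. Write `p ^ c`, with
`c = pNilExponent p`, for the `4` or `p` of the definitions. Being `p`-nil means that a product
`x y` loses at most `c` from the `p`-exponent of `x`, so `p ^ N • x = 0` gives
`p ^ (N - c (i - 1)) • x ^ i = 0`. Since `v_p C(p ^ n, i) = n - v_p i` and `v_p i ≤ c (i - 1)`,
with strict inequality for `i ≥ 2`, every term with `i ≥ 2` vanishes as soon as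
`p ^ (n + 1) • x = 0`. Hence `p ^ n • x = 0` forces `(1 + x) ^ p ^ n = 1`, and conversely
`(1 + x) ^ p ^ n = 1` lets one lower the exponent of a `p`-torsion element `x` step by step down
to `n`. Finally `p ^ n • (x + y + x y) = 0` when `p ^ n • x = p ^ n • y = 0`, so these elements
already form a subgroup.
-/

open Finset Unitization

def pNilExponent (p : ℕ) : ℕ := if p = 2 then 2 else 1

lemma pow_pNilExponent (p : ℕ) : p ^ pNilExponent p = if p = 2 then 4 else p := by
  unfold pNilExponent
  split_ifs with h <;> simp [h]

namespace Nat

lemma factorization_succ_le_pNilExponent_mul (p i : ℕ) :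
    (i + 1).factorization p ≤ pNilExponent p * i := by
  have hc : 0 < pNilExponent p := by unfold pNilExponent; split_ifs <;> omega
  exact (le_of_lt_succ (factorization_lt p i.add_one_ne_zero)).trans (Nat.le_mul_of_pos_left i hc)

lemma factorization_succ_lt_pNilExponent_mul {p i : ℕ} (hp : p.Prime) (hi : i ≠ 0) :
    (i + 1).factorization p < pNilExponent p * i := by
  unfold pNilExponent
  split_ifs with h2
  · have := factorization_lt (n := i + 1) p (by omega)
    omega
  · have hp3 : 3 ≤ p := lt_of_le_of_ne hp.two_le (Ne.symm h2)
    have hdvd : p ^ (i + 1).factorization p ≤ i + 1 := le_of_dvd i.succ_pos (ordProj_dvd _ p)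
    have h2i : i < 2 ^ i := i.lt_two_pow_self
    have hpi : 2 ^ i < p ^ i := Nat.pow_lt_pow_left (by omega : 2 < p) hi
    rw [one_mul]
    exact (Nat.pow_lt_pow_iff_right hp.one_lt).1 (by omega : p ^ _ < p ^ i)

lemma pow_sub_factorization_dvd_choose {p n k : ℕ} (hp : p.Prime) (hkn : k ≤ p ^ n)
    (hk : k ≠ 0) : p ^ (n - k.factorization p) ∣ (p ^ n).choose k := by
  rw [← factorization_choose_prime_pow hp hkn hk]
  exact ordProj_dvd _ p

end Nat

lemma pow_smul_eq_zero_of_le {M : Type*} [AddMonoid M] {p k l : ℕ} {x : M} (h : k ≤ l)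
    (hx : p ^ k • x = 0) : p ^ l • x = 0 := by
  obtain ⟨d, hd⟩ := pow_dvd_pow p h
  rw [hd, mul_comm, mul_smul, hx, smul_zero]

lemma one_add_pow_eq_one_add_sum {A : Type*} [Ring A] (a : A) (k : ℕ) :
    (1 + a) ^ k = 1 + ∑ i ∈ range k, k.choose (i + 1) • a ^ (i + 1) := by
  rw [add_comm, (Commute.one_right a).add_pow, sum_range_succ', add_comm]
  simp [nsmul_eq_mul, (Nat.cast_commute _ _).eq]

section PNil

variable {p : ℕ} {R : Type*} [NonUnitalRing R]

lemma IsLeftPNil.smul_mul_eq_zero (h : IsLeftPNil p R) {m : ℕ} {x : R}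
    (hx : p ^ (m + pNilExponent p) • x = 0) (y : R) : p ^ m • (x * y) = 0 := by
  rw [← smul_mul_assoc]
  refine h _ ?_ y
  rwa [← pow_pNilExponent, smul_smul, ← pow_add, add_comm]

lemma IsRightPNil.smul_mul_eq_zero (h : IsRightPNil p R) {m : ℕ} {x : R}
    (hx : p ^ (m + pNilExponent p) • x = 0) (y : R) : p ^ m • (y * x) = 0 := by
  rw [← mul_smul_comm]
  refine h _ ?_ y
  rwa [← pow_pNilExponent, smul_smul, ← pow_add, add_comm]

lemma exists_inr_pow_succ_eq (hnil : IsLeftPNil p R ∨ IsRightPNil p R) {x : R} (i : ℕ) {m : ℕ}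
    (hx : p ^ (m + pNilExponent p * i) • x = 0) :
    ∃ z : R, (x : Unitization ℤ R) ^ (i + 1) = z ∧ p ^ m • z = 0 := by
  induction i generalizing m with
  | zero => exact ⟨x, pow_one _, by simpa using hx⟩
  | succ i ih =>
    obtain ⟨z, hz, hmz⟩ := ih (m := m + pNilExponent p) (by convert hx using 3; ring)
    rcases hnil with hL | hR
    · exact ⟨z * x, by rw [pow_succ, hz, inr_mul], hL.smul_mul_eq_zero hmz x⟩
    · exact ⟨x * z, by rw [pow_succ', hz, inr_mul], hR.smul_mul_eq_zero hmz x⟩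

lemma nsmul_inr_pow_succ_eq_zero (hnil : IsLeftPNil p R ∨ IsRightPNil p R) {x : R} {N : ℕ}
    (hx : p ^ N • x = 0) (i : ℕ) {d : ℕ} (hd : p ^ (N - pNilExponent p * i) ∣ d) :
    d • (x : Unitization ℤ R) ^ (i + 1) = 0 := by
  obtain ⟨z, hz, hmz⟩ := exists_inr_pow_succ_eq hnil i (m := N - pNilExponent p * i)
    (pow_smul_eq_zero_of_le (by omega) hx)
  obtain ⟨t, rfl⟩ := hd
  rw [mul_comm, mul_smul, hz, ← inr_smul, hmz, inr_zero, smul_zero]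

lemma one_add_inr_pow_eq_one (hp : p.Prime) (hnil : IsLeftPNil p R ∨ IsRightPNil p R) {x : R}
    {n : ℕ} (hx : p ^ n • x = 0) : (1 + (x : Unitization ℤ R)) ^ p ^ n = 1 := by
  rw [one_add_pow_eq_one_add_sum (x : Unitization ℤ R), add_eq_left]
  refine sum_eq_zero fun i hi => nsmul_inr_pow_succ_eq_zero hnil hx i ?_
  have hv := Nat.factorization_succ_le_pNilExponent_mul p i
  exact (pow_dvd_pow p (by omega)).trans
    (Nat.pow_sub_factorization_dvd_choose (k := i + 1) hp (mem_range.1 hi) i.add_one_ne_zero)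

lemma pow_add_smul_eq_zero_of_one_add_inr_pow_eq_one (hp : p.Prime)
    (hnil : IsLeftPNil p R ∨ IsRightPNil p R) {x : R} {n j : ℕ}
    (h : (1 + (x : Unitization ℤ R)) ^ p ^ n = 1) (hx : p ^ (n + j + 1) • x = 0) :
    p ^ (n + j) • x = 0 := by
  rw [one_add_pow_eq_one_add_sum (x : Unitization ℤ R), add_eq_left] at h
  have hsum : ∑ i ∈ range (p ^ n),
      (p ^ j * (p ^ n).choose (i + 1)) • (x : Unitization ℤ R) ^ (i + 1) = 0 := by
    simp_rw [mul_smul, ← smul_sum, h, smul_zero]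
  have hterm : ∀ i ∈ range (p ^ n), i ≠ 0 →
      (p ^ j * (p ^ n).choose (i + 1)) • (x : Unitization ℤ R) ^ (i + 1) = 0 := by
    intro i hi hi0
    refine nsmul_inr_pow_succ_eq_zero hnil hx i ?_
    have hv := Nat.factorization_succ_lt_pNilExponent_mul hp hi0
    exact (pow_dvd_pow p (by omega)).trans (pow_add p j _ ▸ mul_dvd_mul_left _
      (Nat.pow_sub_factorization_dvd_choose (k := i + 1) hp (mem_range.1 hi) i.add_one_ne_zero))
  rw [sum_eq_single_of_mem 0 (mem_range.2 (pow_pos hp.pos n)) hterm] at hsum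
  rw [zero_add, Nat.choose_one_right, pow_one, ← pow_add, add_comm j, ← inr_smul] at hsum
  exact inr_injective (R := ℤ) (hsum.trans (inr_zero ℤ).symm)

lemma pow_smul_eq_zero_of_one_add_inr_pow_eq_one (hp : p.Prime)
    (hnil : IsLeftPNil p R ∨ IsRightPNil p R) {x : R} {n k : ℕ}
    (h : (1 + (x : Unitization ℤ R)) ^ p ^ n = 1) (hk : p ^ k • x = 0) : p ^ n • x = 0 := by
  suffices ∀ j, p ^ (n + j) • x = 0 → p ^ n • x = 0 from
    this k (pow_smul_eq_zero_of_le (by omega) hk)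
  intro j
  induction j with
  | zero => exact id
  | succ j ih => exact fun hj => ih (pow_add_smul_eq_zero_of_one_add_inr_pow_eq_one hp hnil h hj)

end PNil

namespace PreQuasiregular

variable {R : Type*} [NonUnitalRing R]

def oneAddInr : PreQuasiregular R →* Unitization ℤ R where
  toFun w := 1 + (w.val : Unitization ℤ R)
  map_one' := by simp [val_one]
  map_mul' x y := by
    simp only [val_mul, inr_add, inr_mul]
    noncomm_ring

lemma oneAddInr_injective : Function.Injective (oneAddInr (R := R)) := by
  intro v w h
  have hval : v.val = w.val := inr_injective (R := ℤ) (add_left_cancel h)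
  cases v; cases w; cases hval; rfl

lemma pow_eq_one_iff_one_add_inr_pow (w : PreQuasiregular R) (k : ℕ) :
    w ^ k = 1 ↔ (1 + (w.val : Unitization ℤ R)) ^ k = 1 := by
  rw [← oneAddInr_injective.eq_iff, map_pow, map_one]
  rfl

end PreQuasiregular

lemma Subgroup.mem_closure_setOf_pow_eq_one_iff {G : Type*} [Group G] {k : ℕ}
    (hmul : ∀ a b : G, a ^ k = 1 → b ^ k = 1 → (a * b) ^ k = 1) {g : G} :
    g ∈ closure {g : G | g ^ k = 1} ↔ g ^ k = 1 :=
  ⟨fun hg => closure_induction (fun _ h => h) (one_pow k) (fun a b _ _ => hmul a b)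
    (fun a _ ha => by rw [inv_pow, ha, inv_one]) hg, fun hg => subset_closure hg⟩

section AdjointGroup

variable {p : ℕ} {R : Type*} [NonUnitalRing R]

lemma AdjointGroup.pow_prime_pow_eq_one_iff (hp : p.Prime) (hpR : ∀ x : R, ∃ k : ℕ, p ^ k • x = 0)
    (hnil : IsLeftPNil p R ∨ IsRightPNil p R) (n : ℕ) (u : AdjointGroup R) :
    u ^ p ^ n = 1 ↔ p ^ n • u.val.val = 0 := by
  rw [← Units.val_eq_one, Units.val_pow_eq_pow_val, PreQuasiregular.pow_eq_one_iff_one_add_inr_pow]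
  exact ⟨fun h => pow_smul_eq_zero_of_one_add_inr_pow_eq_one hp hnil h (hpR _).choose_spec,
    one_add_inr_pow_eq_one hp hnil⟩

lemma AdjointGroup.exists_pow_prime_pow_eq_one (hp : p.Prime)
    (hnil : IsLeftPNil p R ∨ IsRightPNil p R) {n : ℕ} {x : R} (hx : p ^ n • x = 0) :
    ∃ u : AdjointGroup R, u.val.val = x ∧ u ^ p ^ n = 1 := by
  have h : PreQuasiregular.equiv x ^ p ^ n = 1 :=
    (PreQuasiregular.pow_eq_one_iff_one_add_inr_pow _ _).2 (one_add_inr_pow_eq_one hp hnil hx)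
  exact ⟨Units.ofPowEqOne _ _ h (pow_ne_zero n hp.ne_zero), rfl, Units.pow_ofPowEqOne h _⟩

end AdjointGroup

theorem adjointGroup_omega_eq_of_pNil_general (p : ℕ) (hp : p.Prime) (R : Type*) [NonUnitalRing R]
    (hpR : ∀ x : R, ∃ k : ℕ, p ^ k • x = 0)
    (hnil : IsLeftPNil p R ∨ IsRightPNil p R) (n : ℕ) :
    {x : R | ∃ u : AdjointGroup R, u.val.val = x ∧ u ^ p ^ n = 1} =
      {x : R | p ^ n • x = 0} ∧
    ∀ u : AdjointGroup R,
      u ∈ Subgroup.closure {v : AdjointGroup R | v ^ p ^ n = 1} ↔ u ^ p ^ n = 1 := by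
  have key := AdjointGroup.pow_prime_pow_eq_one_iff hp hpR hnil n
  refine ⟨Set.ext fun x => ⟨?_, AdjointGroup.exists_pow_prime_pow_eq_one hp hnil⟩,
    fun u => Subgroup.mem_closure_setOf_pow_eq_one_iff fun a b ha hb => ?_⟩
  · rintro ⟨u, rfl, hu⟩
    exact (key u).1 hu
  · rw [key] at ha hb ⊢
    simp only [Units.val_mul, PreQuasiregular.val_mul, smul_add, ← smul_mul_assoc, ha, hb,
      zero_mul, add_zero]

/-- **Theorem A.** Let `R` be a `p`-ring (its additive group is a `p`-group). If `R` is left or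
right `p`-nil, then for every `n ≥ 1` the set of elements of the adjoint group `R∘` whose
`∘`-order divides `p ^ n` coincides with `Ω_n(R⁺) = {x : R | p ^ n • x = 0}`; in particular the
subgroup of `R∘` generated by the elements of order dividing `p ^ n` is exactly the set of such
elements. -/
theorem adjointGroup_omega_eq_of_pNil (p : ℕ) (hp : p.Prime) (R : Type*) [NonUnitalRing R]
    (hpR : ∀ x : R, ∃ k : ℕ, p ^ k • x = 0)
    (hnil : IsLeftPNil p R ∨ IsRightPNil p R) (n : ℕ) (hn : 1 ≤ n) :
    {x : R | ∃ u : AdjointGroup R, u.val.val = x ∧ u ^ p ^ n = 1} =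
      {x : R | p ^ n • x = 0} ∧
    ∀ u : AdjointGroup R,
      u ∈ Subgroup.closure {v : AdjointGroup R | v ^ p ^ n = 1} ↔ u ^ p ^ n = 1 :=
  adjointGroup_omega_eq_of_pNil_general p hp R hpR hnil n
end

section
/- Let p be a prime and let R be a ring whose additive group is a p-group. If R is p-nil, then Ω_1(R∘) is contained in the center of the adjoint group R∘ when p > 2, and Ω_2(R∘) is contained in the center of R∘ when p = 2; that is, R∘ is p-central. -/
/-! If `u = x` satisfies `u ^ q = 1` in the adjoint group, where `q = p ^ e` is `p` (resp. `4`),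
then `(1 + x) ^ q = 1` in the unitization, i.e. `q • x = -∑_{i ≥ 2} (q.choose i) • x ^ i`. The nil
condition lowers additive orders of products: `p ^ m • z = 0` forces `p ^ (m - e) • (z * w) = 0`.
So if `p ^ (k + 1) • x = 0` with `k ≥ e`, multiplying the relation by `p ^ (k - e)` kills every
term on the right (for `i = 2` because `p ∣ q.choose 2`, for `i ≥ 3` because already
`p ^ (k + 1 - 2 * e) • x ^ 3 = 0`), whence `p ^ k • x = 0`. Descending, we get
`q • x = 0`, so `x` annihilates `R` on both sides and `x ∘ y = x + y = y ∘ x`. -/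

open Finset Unitization

lemma nsmul_eq_zero_of_dvd {M : Type*} [AddMonoid M] {m n : ℕ} {a : M} (h : m ∣ n)
    (ha : m • a = 0) : n • a = 0 := by
  obtain ⟨c, rfl⟩ := h
  rw [mul_nsmul, ha, nsmul_zero]

section Ring

variable {A : Type*} [Ring A]

lemma nsmul_add_sum_eq_zero_of_one_add_pow_eq_one {a : A} {n : ℕ} (h : (1 + a) ^ (n + 2) = 1) :
    (n + 2) • a + ∑ i ∈ range (n + 1), (n + 2).choose (i + 2) • a ^ (i + 2) = 0 := by
  rw [add_comm, (Commute.one_right a).add_pow, sum_range_succ', sum_range_succ'] at h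
  simp only [one_pow, mul_one, ← nsmul_eq_mul', zero_add, Nat.choose_zero_right,
    Nat.choose_one_right, pow_zero, pow_one, one_smul] at h
  rwa [add_eq_right, add_comm] at h

lemma pow_nsmul_eq_zero_of_one_add_pow_eq_one {p e k : ℕ} {a : A} (hp : 1 < p) (he : 1 ≤ e)
    (hp_choose : p ∣ (p ^ e).choose 2) (h : (1 + a) ^ p ^ e = 1)
    (h2 : p ^ (k + 1 - e) • a ^ 2 = 0) (h3 : p ^ (k + 1 - 2 * e) • a ^ 3 = 0) (hek : e ≤ k) :
    p ^ k • a = 0 := by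
  obtain ⟨n, hn⟩ : ∃ n, p ^ e = n + 2 :=
    ⟨p ^ e - 2, by have := Nat.le_self_pow (by omega : e ≠ 0) p; omega⟩
  rw [hn] at h hp_choose
  have hrel := nsmul_add_sum_eq_zero_of_one_add_pow_eq_one h
  rw [← Nat.add_sub_cancel' hek, pow_add, mul_nsmul, hn, eq_neg_of_add_eq_zero_left hrel, smul_neg,
    smul_sum, neg_eq_zero]
  refine sum_eq_zero fun i _ => ?_
  rw [smul_smul]
  rcases i with _ | i
  · obtain ⟨c, hc⟩ := hp_choose
    refine nsmul_eq_zero_of_dvd ?_ h2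
    rw [hc, show k + 1 - e = k - e + 1 by omega, pow_succ]
    exact mul_dvd_mul_left _ (dvd_mul_right p c)
  · rw [show i + 1 + 2 = 3 + i by omega, pow_add, ← smul_mul_assoc,
      nsmul_eq_zero_of_dvd ((pow_dvd_pow p (by omega)).mul_right _) h3, zero_mul]

end Ring

section PNil

variable {p e : ℕ} {R : Type*} [NonUnitalRing R]

lemma IsLeftPNil.pow_sub_nsmul_mul_eq_zero (hl : IsLeftPNil p R)
    (he : (if p = 2 then 4 else p) = p ^ e) {m : ℕ} {z : R} (hz : p ^ m • z = 0) (w : R) :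
    p ^ (m - e) • (z * w) = 0 := by
  rw [← smul_mul_assoc]
  refine hl _ ?_ w
  rw [he, smul_smul, ← pow_add]
  exact nsmul_eq_zero_of_dvd (pow_dvd_pow p (by omega)) hz

lemma IsLeftPNil.pow_nsmul_eq_zero_of_one_add_pow_eq_one (hl : IsLeftPNil p R)
    (he : (if p = 2 then 4 else p) = p ^ e) (hp : 1 < p) (he1 : 1 ≤ e)
    (hp_choose : p ∣ (p ^ e).choose 2) {x : R} (h : (1 + (x : Unitization ℤ R)) ^ p ^ e = 1)
    {k : ℕ} (hk : p ^ k • x = 0) : p ^ e • x = 0 := by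
  induction k with
  | zero => rw [pow_zero, one_smul] at hk; rw [hk, smul_zero]
  | succ k ih =>
    rcases le_or_gt e k with hek | hke
    · refine ih (inr_injective (R := ℤ) ?_)
      have h2 := hl.pow_sub_nsmul_mul_eq_zero he hk x
      have h3 := hl.pow_sub_nsmul_mul_eq_zero he h2 x
      rw [Nat.sub_sub, ← two_mul] at h3
      rw [inr_smul, inr_zero]
      refine _root_.pow_nsmul_eq_zero_of_one_add_pow_eq_one (A := Unitization ℤ R) hp he1
        hp_choose h ?_ ?_ hek
      · rw [sq, ← inr_mul, ← inr_smul, h2, inr_zero]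
      · rw [pow_succ, sq, ← inr_mul, ← inr_mul, ← inr_smul, h3, inr_zero]
    · exact nsmul_eq_zero_of_dvd (pow_dvd_pow p hke) hk

end PNil

lemma AdjointGroup.one_add_pow_eq_one {R : Type*} [NonUnitalRing R] {u : AdjointGroup R} {n : ℕ}
    (h : u ^ n = 1) : (1 + (u.val.val : Unitization ℤ R)) ^ n = 1 := by
  simpa using congr((((unitsFstOne_mulEquiv_quasiregular ℤ).symm $h).val.val : Unitization ℤ R))

lemma AdjointGroup.mem_center_of_forall_mul_eq_zero {R : Type*} [NonUnitalRing R]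
    {u : AdjointGroup R} (hl : ∀ y, u.val.val * y = 0) (hr : ∀ y, y * u.val.val = 0) :
    u ∈ Subgroup.center (AdjointGroup R) := by
  refine Subgroup.mem_center_iff.mpr fun g => Units.ext (PreQuasiregular.equiv.symm.injective ?_)
  change (g.val * u.val).val = (u.val * g.val).val
  rw [PreQuasiregular.val_mul, PreQuasiregular.val_mul, hl, hr, add_zero, add_zero, add_comm]

lemma pNil_modulus_eq_pow (p : ℕ) : (if p = 2 then 4 else p) = p ^ (if p = 2 then 2 else 1) := by
  split_ifs with h
  · subst h; rfl
  · rw [pow_one]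

lemma Nat.Prime.dvd_choose_two_pNil_modulus {p : ℕ} (hp : p.Prime) :
    p ∣ (p ^ (if p = 2 then 2 else 1)).choose 2 := by
  split_ifs with h
  · subst h; decide
  · rw [pow_one]; exact hp.dvd_choose_self two_ne_zero (lt_of_le_of_ne hp.two_le (Ne.symm h))

/-- **Corollary A.** Let `R` be a `p`-ring. If `R` is `p`-nil (both left and right `p`-nil), then
`Ω₁(R∘) ≤ Z(R∘)` for odd `p`, and `Ω₂(R∘) ≤ Z(R∘)` for `p = 2`; that is, `R∘` is `p`-central. -/
theorem adjointGroup_pCentral_of_pNil (p : ℕ) (hp : p.Prime) (R : Type*) [NonUnitalRing R]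
    (hpR : ∀ x : R, ∃ k : ℕ, p ^ k • x = 0)
    (hl : IsLeftPNil p R) (hr : IsRightPNil p R) :
    Subgroup.closure {x : AdjointGroup R | x ^ p ^ (if p = 2 then 2 else 1) = 1} ≤
      Subgroup.center (AdjointGroup R) := by
  rw [Subgroup.closure_le]
  intro u hu
  have he := pNil_modulus_eq_pow p
  obtain ⟨k, hk⟩ := hpR u.val.val
  have hx : (if p = 2 then 4 else p) • u.val.val = 0 := by
    rw [he]
    refine hl.pow_nsmul_eq_zero_of_one_add_pow_eq_one he hp.one_lt ?_
      hp.dvd_choose_two_pNil_modulus (AdjointGroup.one_add_pow_eq_one hu) hk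
    split_ifs <;> norm_num
  exact AdjointGroup.mem_center_of_forall_mul_eq_zero (hl _ hx) (hr _ hx)
end

section
/- Let p be a prime and let R be a ring whose additive group has finite exponent p^m. If R is left p-nil or right p-nil, then R is nilpotent of class at most m, i.e. R^{m+1} = 0, where R^k denotes the additive subgroup generated by all products of k elements of R. -/
/-- The set of products of `k` elements of `R` (by associativity, every such product is a
left-normed one). -/
def ringProducts (R : Type*) [NonUnitalRing R] : ℕ → Set R
  | 0 => Set.univ
  | 1 => Set.univ
  | (k + 2) => {z : R | ∃ x ∈ ringProducts R (k + 1), ∃ y : R, z = x * y}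

/-- `R^k`: the additive subgroup generated by all products of `k` elements of `R`. -/
def ringPower (R : Type*) [NonUnitalRing R] (k : ℕ) : AddSubgroup R :=
  AddSubgroup.closure (ringProducts R k)

section

variable {p : ℕ} {R : Type*} [NonUnitalRing R]

lemma ite_two_four_nsmul_eq_zero_of_nsmul_eq_zero {x : R} (hx : p • x = 0) :
    (if p = 2 then 4 else p) • x = 0 := by
  split_ifs with hp
  · subst hp
    rw [show (4 : ℕ) = 2 * 2 from rfl, mul_nsmul, hx, nsmul_zero]
  · exact hx

namespace IsLeftPNil

lemma mul_eq_zero (h : IsLeftPNil p R) {x : R} (hx : p • x = 0) (y : R) : x * y = 0 :=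
  h x (ite_two_four_nsmul_eq_zero_of_nsmul_eq_zero hx) y

lemma pow_nsmul_mul_eq_zero (h : IsLeftPNil p R) {n : ℕ} {x : R} (hx : p ^ (n + 1) • x = 0)
    (y : R) : p ^ n • (x * y) = 0 := by
  rw [← smul_mul_assoc]
  exact h.mul_eq_zero (by rwa [← mul_nsmul, ← pow_succ]) y

end IsLeftPNil

namespace IsRightPNil

lemma mul_eq_zero (h : IsRightPNil p R) {x : R} (hx : p • x = 0) (y : R) : y * x = 0 :=
  h x (ite_two_four_nsmul_eq_zero_of_nsmul_eq_zero hx) y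

lemma pow_nsmul_mul_eq_zero (h : IsRightPNil p R) {n : ℕ} {x : R} (hx : p ^ (n + 1) • x = 0)
    (y : R) : p ^ n • (y * x) = 0 := by
  rw [← mul_smul_comm]
  exact h.mul_eq_zero (by rwa [← mul_nsmul, ← pow_succ]) y

end IsRightPNil

lemma exists_eq_mul_of_mem_ringProducts_add_two {k : ℕ} {z : R}
    (hz : z ∈ ringProducts R (k + 2)) : ∃ x : R, ∃ y ∈ ringProducts R (k + 1), z = x * y := by
  induction k generalizing z with
  | zero =>
    obtain ⟨x, -, y, rfl⟩ := hz
    exact ⟨x, y, trivial, rfl⟩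
  | succ k ih =>
    obtain ⟨x, hx, y, rfl⟩ := hz
    obtain ⟨a, b, hb, rfl⟩ := ih hx
    exact ⟨a, b * y, ⟨b, hb, y, rfl⟩, mul_assoc a b y⟩

lemma pow_nsmul_eq_zero_of_mem_ringProducts (hnil : IsLeftPNil p R ∨ IsRightPNil p R)
    {k n : ℕ} (htors : ∀ z : R, p ^ (n + k) • z = 0) {x : R}
    (hx : x ∈ ringProducts R (k + 1)) : p ^ n • x = 0 := by
  induction k generalizing n x with
  | zero => exact htors x
  | succ k ih =>
    have htors' : ∀ z : R, p ^ (n + 1 + k) • z = 0 := by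
      simpa only [Nat.add_right_comm n 1 k, Nat.add_assoc] using htors
    rcases hnil with hL | hR
    · obtain ⟨a, ha, b, rfl⟩ := hx
      exact hL.pow_nsmul_mul_eq_zero (ih htors' ha) b
    · obtain ⟨a, b, hb, rfl⟩ := exists_eq_mul_of_mem_ringProducts_add_two hx
      exact hR.pow_nsmul_mul_eq_zero (ih htors' hb) a

end

theorem pNil_ring_nilpotent_general (p m : ℕ) (R : Type*) [NonUnitalRing R]
    (hexp : AddMonoid.exponent R = p ^ m)
    (hnil : IsLeftPNil p R ∨ IsRightPNil p R) :
    ringPower R (m + 1) = ⊥ := by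
  have htors : ∀ z : R, p ^ (0 + m) • z = 0 := fun z => by
    rw [Nat.zero_add, ← hexp]
    exact AddMonoid.exponent_nsmul_eq_zero z
  rw [eq_bot_iff, ringPower, AddSubgroup.closure_le]
  intro x hx
  simpa using pow_nsmul_eq_zero_of_mem_ringProducts hnil htors hx

/-- **Theorem 2.2 (ring part).** Let `R` be a ring whose additive group has finite exponent
`p ^ m`. If `R` is left or right `p`-nil, then `R` is nilpotent of class at most `m`,
i.e. `R ^ (m + 1) = 0`. -/
theorem pNil_ring_nilpotent (p m : ℕ) (hp : p.Prime) (R : Type*) [NonUnitalRing R]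
    (hexp : AddMonoid.exponent R = p ^ m)
    (hnil : IsLeftPNil p R ∨ IsRightPNil p R) :
    ringPower R (m + 1) = ⊥ :=
  pNil_ring_nilpotent_general p m R hexp hnil
end

section
/- Let p be a prime and let R be a left p-nil (respectively right p-nil) ring. Then for every n ≥ 1, the subgroup Ω_n(R^+) = {x ∈ R : p^n·x = 0} is a two-sided ideal of R and the quotient ring R/Ω_n(R^+) is left p-nil (respectively right p-nil). -/
/-!
Let `c` be `p` (or `4` when `p = 2`). If `c • [a] = 0` in `R ⧸ Ω`, where `Ω` is the `m`-torsion
ideal, then `c • (m • a) = 0` in `R`, so the `p`-nil hypothesis makes `m • a` annihilate `R`;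
hence `m • (a * b) = (m • a) * b = 0`, i.e. `[a] * [b] = 0`.
-/

namespace TwoSidedIdeal

variable {R : Type*} [NonUnitalRing R]

lemma coe_eq_zero_iff (I : TwoSidedIdeal R) {x : R} : (x : I.ringCon.Quotient) = 0 ↔ x ∈ I :=
  I.ringCon.eq

variable (R) in
def torsionBy (m : ℕ) : TwoSidedIdeal R :=
  mk' {x | m • x = 0} (smul_zero m)
    (fun hx hy => by rw [Set.mem_ofPred_eq, smul_add, hx, hy, add_zero])
    (fun hx => by rw [Set.mem_ofPred_eq, smul_neg, hx, neg_zero])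
    (fun hy => by rw [Set.mem_ofPred_eq, ← mul_smul_comm, hy, mul_zero])
    (fun hx => by rw [Set.mem_ofPred_eq, ← smul_mul_assoc, hx, zero_mul])

lemma mem_torsionBy {m : ℕ} {x : R} : x ∈ torsionBy R m ↔ m • x = 0 :=
  mem_mk' ..

lemma coe_torsionBy (m : ℕ) : (torsionBy R m : Set R) = {x | m • x = 0} :=
  coe_mk' ..

end TwoSidedIdeal

section

open TwoSidedIdeal

variable {p : ℕ} {R : Type*} [NonUnitalRing R]

lemma IsLeftPNil.quotient_torsionBy (h : IsLeftPNil p R) (m : ℕ) :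
    IsLeftPNil p (torsionBy R m).ringCon.Quotient := by
  rintro ⟨a⟩ ha ⟨b⟩
  have hma : (if p = 2 then 4 else p) • m • a = 0 := by
    rw [smul_comm]
    exact mem_torsionBy.mp ((coe_eq_zero_iff _).mp ha)
  exact (coe_eq_zero_iff _).mpr (mem_torsionBy.mpr (smul_mul_assoc m a b ▸ h _ hma b))

lemma IsRightPNil.quotient_torsionBy (h : IsRightPNil p R) (m : ℕ) :
    IsRightPNil p (torsionBy R m).ringCon.Quotient := by
  rintro ⟨a⟩ ha ⟨b⟩
  have hma : (if p = 2 then 4 else p) • m • a = 0 := by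
    rw [smul_comm]
    exact mem_torsionBy.mp ((coe_eq_zero_iff _).mp ha)
  exact (coe_eq_zero_iff _).mpr (mem_torsionBy.mpr (mul_smul_comm m b a ▸ h _ hma b))

end

theorem quotient_omega_pNil_general (p n : ℕ)
    (R : Type*) [NonUnitalRing R] :
    (IsLeftPNil p R → ∃ I : TwoSidedIdeal R, (I : Set R) = {x : R | p ^ n • x = 0} ∧
      IsLeftPNil p I.ringCon.Quotient) ∧
    (IsRightPNil p R → ∃ I : TwoSidedIdeal R, (I : Set R) = {x : R | p ^ n • x = 0} ∧
      IsRightPNil p I.ringCon.Quotient) :=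
  ⟨fun h => ⟨.torsionBy R (p ^ n), TwoSidedIdeal.coe_torsionBy _, h.quotient_torsionBy _⟩,
    fun h => ⟨.torsionBy R (p ^ n), TwoSidedIdeal.coe_torsionBy _, h.quotient_torsionBy _⟩⟩

/-- **Lemma 2.3.** If `R` is a left (resp. right) `p`-nil ring, then for every `n ≥ 1` the set
`Ω_n(R⁺) = {x : R | p ^ n • x = 0}` is a two-sided ideal of `R` and the quotient ring
`R / Ω_n(R⁺)` is left (resp. right) `p`-nil. -/
theorem quotient_omega_pNil (p n : ℕ) (hp : p.Prime) (hn : 1 ≤ n)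
    (R : Type*) [NonUnitalRing R] :
    (IsLeftPNil p R → ∃ I : TwoSidedIdeal R, (I : Set R) = {x : R | p ^ n • x = 0} ∧
      IsLeftPNil p I.ringCon.Quotient) ∧
    (IsRightPNil p R → ∃ I : TwoSidedIdeal R, (I : Set R) = {x : R | p ^ n • x = 0} ∧
      IsRightPNil p I.ringCon.Quotient) :=
  quotient_omega_pNil_general p n R
end

section
/- Let p be a prime and let R be a nonzero finite left p-nil ring whose additive group is a p-group. Let U be the intersection of the right annihilator {x ∈ R : y·x = 0 for all y ∈ R} of R with Ω_1(R^+) = {x ∈ R : p·x = 0}. Then U is a nonzero two-sided ideal of R and the quotient ring R/U is left p-nil. -/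
/-!
Since `p • a = 0` forces `a * b = 0`, an element killed by `p ^ (j + 1)` has its square killed by
`p ^ j`; hence `s * y = y` forces `y = 0`. So for `x ≠ 0` in `Ω₁(R⁺)` and `r * x ≠ 0` the set
`R * (r * x)` is a proper subset of `R * x`, and a nonzero `x ∈ Ω₁(R⁺)` with `R * x` of least
size lies in the right annihilator. In the quotient, if `c • x` (with `c = if p = 2 then 4 else p`)
lies in the ideal then `c` kills `z * x` and `p • x`, so both are left annihilators and `x * y`
lies in the ideal.
-/

section

variable {p : ℕ} {R : Type*} [NonUnitalRing R]

theorem IsLeftPNil.mul_eq_zero_of_nsmul_eq_zero (hl : IsLeftPNil p R) {a : R} (ha : p • a = 0)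
    (b : R) : a * b = 0 := by
  refine hl a ?_ b
  split_ifs with h2
  · subst h2
    rw [show 4 = 2 * 2 from rfl, mul_nsmul, ha, nsmul_zero]
  · exact ha

theorem IsLeftPNil.eq_zero_of_mul_eq_self (hl : IsLeftPNil p R)
    (hpR : ∀ x : R, ∃ k : ℕ, p ^ k • x = 0) {s y : R} (h : s * y = y) : y = 0 := by
  obtain ⟨k, hk⟩ := hpR s
  induction k generalizing s with
  | zero => rw [← h, ← one_nsmul s, ← pow_zero p, hk, zero_mul]
  | succ k ih =>
    refine ih (s := s * s) (by rw [mul_assoc, h, h]) ?_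
    rw [← smul_mul_assoc]
    exact hl.mul_eq_zero_of_nsmul_eq_zero (by rwa [← mul_nsmul', ← pow_succ']) s

theorem IsLeftPNil.range_mul_right_ssubset (hl : IsLeftPNil p R)
    (hpR : ∀ x : R, ∃ k : ℕ, p ^ k • x = 0) {r x : R} (hrx : r * x ≠ 0) :
    Set.range (· * (r * x)) ⊂ Set.range (· * x) := by
  refine Set.ssubset_iff_subset_ne.mpr ⟨?_, fun h => ?_⟩
  · rintro _ ⟨s, rfl⟩
    exact ⟨s * r, mul_assoc s r x⟩
  · obtain ⟨s, hs⟩ : r * x ∈ Set.range (· * (r * x)) := h ▸ ⟨r, rfl⟩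
    exact hrx (hl.eq_zero_of_mul_eq_self hpR hs)

theorem exists_ne_zero_nsmul_eq_zero {A : Type*} [AddMonoid A] {p k : ℕ} {x : A} (hx : x ≠ 0)
    (hk : p ^ k • x = 0) : ∃ y : A, y ≠ 0 ∧ p • y = 0 := by
  induction k generalizing x with
  | zero => exact absurd (by rwa [pow_zero, one_nsmul] at hk) hx
  | succ k ih =>
    by_cases hpx : p • x = 0
    · exact ⟨x, hx, hpx⟩
    · exact ih hpx (by rwa [← mul_nsmul, ← pow_succ'])

variable (p R) in
def rightAnnOmegaOne : TwoSidedIdeal R :=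
  .mk' {x | (∀ y : R, y * x = 0) ∧ p • x = 0}
    ⟨fun y => mul_zero y, nsmul_zero p⟩
    (fun hx hy => ⟨fun z => by rw [mul_add, hx.1, hy.1, add_zero],
      by rw [nsmul_add, hx.2, hy.2, add_zero]⟩)
    (fun hx => ⟨fun z => by rw [mul_neg, hx.1, neg_zero], by rw [smul_neg, hx.2, neg_zero]⟩)
    (fun {x _} hy => ⟨fun z => by rw [← mul_assoc, hy.1],
      by rw [← mul_smul_comm, hy.2, mul_zero]⟩)
    (fun hx => ⟨fun z => by rw [← mul_assoc, hx.1, zero_mul],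
      by rw [← smul_mul_assoc, hx.2, zero_mul]⟩)

theorem mem_rightAnnOmegaOne {x : R} :
    x ∈ rightAnnOmegaOne p R ↔ (∀ y : R, y * x = 0) ∧ p • x = 0 :=
  TwoSidedIdeal.mem_mk' ..

theorem IsLeftPNil.exists_mem_rightAnnOmegaOne_ne_zero [Finite R] [Nontrivial R]
    (hl : IsLeftPNil p R) (hpR : ∀ x : R, ∃ k : ℕ, p ^ k • x = 0) :
    ∃ u ∈ rightAnnOmegaOne p R, u ≠ 0 := by
  obtain ⟨x, hx⟩ := exists_ne (0 : R)
  obtain ⟨k, hk⟩ := hpR x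
  have : Nonempty {x : R // x ≠ 0 ∧ p • x = 0} :=
    let ⟨y, hy⟩ := exists_ne_zero_nsmul_eq_zero hx hk; ⟨⟨y, hy⟩⟩
  obtain ⟨⟨u, hu0, hpu⟩, hmin⟩ :=
    Finite.exists_min fun x : {x : R // x ≠ 0 ∧ p • x = 0} => (Set.range (· * x.1)).ncard
  refine ⟨u, mem_rightAnnOmegaOne.2 ⟨fun r => by_contra fun hru => ?_, hpu⟩, hu0⟩
  have hpru : p • (r * u) = 0 := by rw [← mul_smul_comm, hpu, mul_zero]
  exact (hmin ⟨r * u, hru, hpru⟩).not_gt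
    (Set.ncard_lt_ncard (hl.range_mul_right_ssubset hpR hru) (Set.toFinite _))

theorem TwoSidedIdeal.ringCon_coe_eq_zero_iff (I : TwoSidedIdeal R) {x : R} :
    (x : I.ringCon.Quotient) = 0 ↔ x ∈ I := by
  rw [← RingCon.coe_zero, RingCon.eq, I.rel_iff, sub_zero]

theorem IsLeftPNil.quotient_rightAnnOmegaOne (hl : IsLeftPNil p R) :
    IsLeftPNil p (rightAnnOmegaOne p R).ringCon.Quotient := by
  rintro ⟨x⟩ hx ⟨y⟩
  obtain ⟨hcx_ann, hcx_p⟩ := mem_rightAnnOmegaOne.1 <|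
    (TwoSidedIdeal.ringCon_coe_eq_zero_iff _).1 ((RingCon.coe_nsmul _ _ x).trans hx)
  refine (RingCon.coe_mul _ x y).symm.trans <|
    (TwoSidedIdeal.ringCon_coe_eq_zero_iff _).2 (mem_rightAnnOmegaOne.2 ⟨fun z => ?_, ?_⟩)
  · rw [← mul_assoc]
    exact hl _ (by rw [← mul_smul_comm, hcx_ann]) y
  · rw [← smul_mul_assoc]
    exact hl _ (by rw [smul_comm, hcx_p]) y

end

theorem rightAnnihilator_inter_omega_ideal_general (p : ℕ)
    (R : Type*) [NonUnitalRing R] [Finite R] [Nontrivial R]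
    (hpR : ∀ x : R, ∃ k : ℕ, p ^ k • x = 0)
    (hl : IsLeftPNil p R) :
    ∃ U : TwoSidedIdeal R,
      (U : Set R) = {x : R | (∀ y : R, y * x = 0) ∧ p • x = 0} ∧
      (∃ u ∈ U, u ≠ (0 : R)) ∧
      IsLeftPNil p U.ringCon.Quotient :=
  ⟨rightAnnOmegaOne p R, TwoSidedIdeal.coe_mk' ..,
    hl.exists_mem_rightAnnOmegaOne_ne_zero hpR, hl.quotient_rightAnnOmegaOne⟩

/-- **Lemma 2.4.** Let `R` be a nonzero finite left `p`-nil ring whose additive group is a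
`p`-group, and let `U` be the intersection of the right annihilator of `R` with
`Ω₁(R⁺) = {x : R | p • x = 0}`. Then `U` is a nonzero two-sided ideal of `R` and the quotient
ring `R / U` is left `p`-nil. -/
theorem rightAnnihilator_inter_omega_ideal (p : ℕ) (hp : p.Prime)
    (R : Type*) [NonUnitalRing R] [Finite R] [Nontrivial R]
    (hpR : ∀ x : R, ∃ k : ℕ, p ^ k • x = 0)
    (hl : IsLeftPNil p R) :
    ∃ U : TwoSidedIdeal R,
      (U : Set R) = {x : R | (∀ y : R, y * x = 0) ∧ p • x = 0} ∧
      (∃ u ∈ U, u ≠ (0 : R)) ∧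
      IsLeftPNil p U.ringCon.Quotient :=
  rightAnnihilator_inter_omega_ideal_general p R hpR hl
end

section
/- Let p be a prime, G a finite p-group, and S = Z(G) ∩ P(G). Then the ring Hom(G, S) of group homomorphisms from G into S, with addition (h + k)(x) = h(x)·k(x) and multiplication (h·k)(x) = k(h(x)), is right p-nil: every h ∈ Hom(G, S) with p·h = 0 (with 4·h = 0 when p = 2) satisfies k·h = 0 for all k ∈ Hom(G, S). -/
/-- `P(G)`: the subgroup `γ₂(G)·G^p` for odd `p`, and `γ₂(G)·G⁴` for `p = 2`, where `G^m` is the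
subgroup generated by `m`-th powers. -/
def groupP (p : ℕ) (G : Type*) [Group G] : Subgroup G :=
  commutator G ⊔ Subgroup.closure {x : G | ∃ g : G, g ^ (if p = 2 then 4 else p) = x}

/-- `Aut_N(G)`: the group of automorphisms `u` of `G` such that `x⁻¹ · u x ∈ N` for all `x`. -/
def autSub {G : Type*} [Group G] (N : Subgroup G) : Subgroup (G ≃* G) where
  carrier := {u : G ≃* G | ∀ x : G, x⁻¹ * u x ∈ N}
  one_mem' := by
    intro x
    simpa using N.one_mem
  mul_mem' := by
    intro u v hu hv x
    have h := N.mul_mem (hv x) (hu (v x))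
    simpa [MulAut.mul_apply, mul_assoc] using h
  inv_mem' := by
    intro u hu x
    have h := N.inv_mem (hu (u⁻¹ x))
    have hx : u (u⁻¹ x) = x := by
      simp [MulAut.inv_def]
    rw [hx] at h
    simpa [mul_inv_rev] using h

/-! Since `S` is central, every `h : G →* S` kills commutators, and `p • h = 0` says that `h` kills
`p`-th powers (`4`-th powers for `p = 2`); hence `P(G) ≤ ker h`. As `k` takes values in `P(G)`,
the product `k · h = h ∘ k` vanishes. -/

theorem commutator_le_ker_of_commute {G H : Type*} [Group G] [Group H] (f : G →* H)
    (hf : ∀ a b, Commute (f a) (f b)) : commutator G ≤ f.ker := by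
  rw [commutator_def, Subgroup.commutator_le]
  intro a _ b _
  rw [MonoidHom.mem_ker, map_commutatorElement, (hf a b).commutator_eq]

theorem groupP_le_ker_of_commute {G H : Type*} [Group G] [Group H] (p : ℕ) (f : G →* H)
    (hcomm : ∀ a b, Commute (f a) (f b)) (hpow : ∀ x, f x ^ (if p = 2 then 4 else p) = 1) :
    groupP p G ≤ f.ker := by
  refine sup_le (commutator_le_ker_of_commute f hcomm) ((Subgroup.closure_le _).2 ?_)
  rintro _ ⟨g, rfl⟩
  rw [SetLike.mem_coe, MonoidHom.mem_ker, map_pow]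
  exact hpow g

theorem homRing_isRightPNil_general (p : ℕ) (G : Type*) [Group G] :
    ∀ h : G →* ↥(Subgroup.center G ⊓ groupP p G),
      (∀ x : G, (h x) ^ (if p = 2 then 4 else p) = 1) →
      ∀ k : G →* ↥(Subgroup.center G ⊓ groupP p G), ∀ x : G, h ↑(k x) = 1 := by
  intro h hpow k x
  have hcomm : ∀ a b, Commute (h a) (h b) := fun a b =>
    Subtype.ext (Subgroup.mem_center_iff.mp (h b).2.1 _)
  exact groupP_le_ker_of_commute p h hcomm hpow (k x).2.2

/-- **Proposition 3.1(a).** Let `G` be a finite `p`-group and `S = Z(G) ∩ P(G)`. The ring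
`Hom(G, S)` (with pointwise addition and multiplication `(h·k)(x) = k(h(x))`) is right `p`-nil:
every `h` with `p·h = 0` (i.e. `(h x)^p = 1` for all `x`; `(h x)^4 = 1` when `p = 2`) satisfies
`k·h = 0` (i.e. `h(k x) = 1` for all `x`) for every `k`. -/
theorem homRing_isRightPNil (p : ℕ) (hp : p.Prime) (G : Type*) [Group G] [Finite G]
    (hG : IsPGroup p G) :
    ∀ h : G →* ↥(Subgroup.center G ⊓ groupP p G),
      (∀ x : G, (h x) ^ (if p = 2 then 4 else p) = 1) →
      ∀ k : G →* ↥(Subgroup.center G ⊓ groupP p G), ∀ x : G, h ↑(k x) = 1 :=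
  homRing_isRightPNil_general p G
end

section
/- Let p be a prime, G a finite p-group, and S = Z(G) ∩ P(G). Then for every n ≥ 1, the subgroup Ω_n(Aut_S(G)) generated by the elements of Aut_S(G) of order dividing p^n coincides with the set of all elements of Aut_S(G) of order dividing p^n, and both are equal to Aut_{Ω_n(S)}(G), where Ω_n(S) = {z ∈ S : z^{p^n} = 1}. -/
/-!
Write `u x = x · f x` for `u ∈ Aut_S(G)`; since `S` is central, `f` is a homomorphism
`G → Z(G)`, and with `φ = f|_{Z(G)}` the binomial theorem for `u = 1 + f` gives
`u^k x = x · ∏_{i<k} φ^i(f x)^{C(k,i+1)}`. A homomorphism into an abelian group maps `P(G)` into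
`m`-th powers (`m = p`, or `4` for `p = 2`), and `f` takes values in `P(G)`, so `φ^i(f x)` is an
`m^i`-th power of a value of `f`. Kummer's theorem makes every factor with `i ≥ 1` a `p^(n+1)`-th
power of a value of `f`, hence `u^(p^n) x = x · (f x)^(p^n) · (f w)^(p^(n+1))` for some `w`. This
gives `u^(p^n) = 1` as soon as `f` has exponent `p^n`; conversely, if `u^(p^n) = 1` then every
`(f x)^(p^n)` is a `p^(n+1)`-th power of a value of `f`, and iterating this in the finite `p`-group
`Z(G)` forces `(f x)^(p^n) = 1`. So `Ω_n(Aut_S(G))` is the subgroup `Aut_{Ω_n(S)}(G)`.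
-/

theorem pow_factorization_succ_dvd {p i : ℕ} (hp : p.Prime) (hi : i ≠ 0) :
    p ^ ((i + 1).factorization p + 1) ∣ (if p = 2 then 4 else p) ^ i := by
  have hv : p ^ (i + 1).factorization p ≤ i + 1 := Nat.ordProj_le p i.succ_ne_zero
  generalize (i + 1).factorization p = v at hv ⊢
  split_ifs with h2
  · subst h2
    rw [show (4 : ℕ) = 2 ^ 2 by rfl, ← pow_mul]
    apply pow_dvd_pow
    have := v.lt_two_pow_self
    omega
  · apply pow_dvd_pow
    have h3 : 3 ^ v ≤ p ^ v := Nat.pow_le_pow_left (hp.two_le.lt_of_ne' h2) v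
    have : 1 + v * 2 ≤ 3 ^ v := one_add_le_pow_of_two_add_nonneg (a := 2) (by norm_num) v
    omega

theorem pow_succ_dvd_pow_mul_choose {p : ℕ} (hp : p.Prime) (n : ℕ) {i : ℕ} (hi : i ≠ 0) :
    p ^ (n + 1) ∣ (if p = 2 then 4 else p) ^ i * (p ^ n).choose (i + 1) := by
  rcases lt_or_ge (p ^ n) (i + 1) with h | h
  · simp [Nat.choose_eq_zero_of_lt h]
  have hsum := Nat.factorization_choose_prime_pow_add_factorization hp h i.succ_ne_zero
  calc p ^ (n + 1)
      = p ^ ((i + 1).factorization p + 1) * p ^ ((p ^ n).choose (i + 1)).factorization p := by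
        rw [← pow_add]; congr 1; omega
    _ ∣ _ := mul_dvd_mul (pow_factorization_succ_dvd hp hi) (Nat.ordProj_dvd _ _)

section PowerMaps

variable {G : Type*} [Group G]

theorem exists_apply_pow_eq_of_mem_groupP {A : Type*} [CommGroup A] (f : G →* A) {p : ℕ} {y : G}
    (hy : y ∈ groupP p G) : ∃ w, f w ^ (if p = 2 then 4 else p) = f y := by
  suffices groupP p G ≤ ((powMonoidHom _).comp f).range.comap f from this hy
  refine sup_le ((Abelianization.commutator_subset_ker f).trans fun y hy => ?_)
    ((Subgroup.closure_le _).2 ?_)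
  · exact ⟨1, by simpa using hy.symm⟩
  · rintro _ ⟨g, rfl⟩
    exact ⟨g, (map_pow f g _).symm⟩

theorem IsPGroup.pow_eq_one_of_forall_exists_pow_mul_eq [Finite G] {p : ℕ} (hp : p.Prime)
    (hG : IsPGroup p G) {α : Type*} (g : α → G) (k : ℕ) (h : ∀ a, ∃ b, g b ^ (k * p) = g a ^ k)
    (a : α) : g a ^ k = 1 := by
  have hdesc : ∀ j a, ∃ b, g b ^ (k * p ^ j) = g a ^ k := by
    intro j
    induction j with
    | zero => exact fun a => ⟨a, by simp⟩
    | succ j ih =>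
      intro a
      obtain ⟨b, hb⟩ := ih a
      obtain ⟨c, hc⟩ := h b
      exact ⟨c, by rw [← hb, pow_mul (g b), ← hc, ← pow_mul]; ring_nf⟩
  have := Fact.mk hp
  obtain ⟨N, hN⟩ := IsPGroup.iff_card.1 hG
  obtain ⟨b, hb⟩ := hdesc N a
  rw [← hb, mul_comm, pow_mul, ← hN, pow_card_eq_one', one_pow]

end PowerMaps

open scoped IsMulCommutative

section Binomial

variable {A : Type*} [CommMonoid A]

/-- The multiplicative form of `((1 + φ) ^ k - 1) / φ` applied to `a`. -/
def iterBinomProd (φ : A →* A) (k : ℕ) (a : A) : A :=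
  ∏ i ∈ Finset.range k, (φ^[i] a) ^ k.choose (i + 1)

theorem iterBinomProd_succ (φ : A →* A) (k : ℕ) (a : A) :
    iterBinomProd φ (k + 1) a = a * iterBinomProd φ k a * φ (iterBinomProd φ k a) := by
  have hφ : φ (iterBinomProd φ k a) = ∏ i ∈ Finset.range k, (φ^[i + 1] a) ^ k.choose (i + 1) := by
    simp only [iterBinomProd, map_prod, map_pow, Function.iterate_succ_apply']
  have hshift : a * φ (iterBinomProd φ k a) =
      ∏ i ∈ Finset.range (k + 1), (φ^[i] a) ^ k.choose i := by
    rw [Finset.prod_range_succ', hφ]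
    simp [mul_comm]
  have htop : iterBinomProd φ k a = ∏ i ∈ Finset.range (k + 1), (φ^[i] a) ^ k.choose (i + 1) := by
    rw [Finset.prod_range_succ, Nat.choose_succ_self, pow_zero, mul_one, iterBinomProd]
  rw [mul_right_comm, hshift, htop, ← Finset.prod_mul_distrib, iterBinomProd]
  refine Finset.prod_congr rfl fun i _ => ?_
  rw [← pow_add, Nat.choose_succ_succ', add_comm]

end Binomial

section CentralAutomorphisms

variable {G : Type*} [Group G]

theorem autSub_mono {N M : Subgroup G} (h : N ≤ M) : autSub N ≤ autSub M :=
  fun _ hu x => h (hu x)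

def centralDisplacement {u : G ≃* G} (hu : u ∈ autSub (Subgroup.center G)) :
    G →* Subgroup.center G where
  toFun x := ⟨x⁻¹ * u x, hu x⟩
  map_one' := by simp
  map_mul' x y := Subtype.ext <| by
    have hcomm : y⁻¹ * (x⁻¹ * u x) = (x⁻¹ * u x) * y⁻¹ := Subgroup.mem_center_iff.1 (hu x) _
    simp only [mul_inv_rev, map_mul, Subgroup.coe_mul]
    rw [show y⁻¹ * x⁻¹ * (u x * u y) = y⁻¹ * (x⁻¹ * u x) * u y by group, hcomm, mul_assoc]

variable {u : G ≃* G} (hu : u ∈ autSub (Subgroup.center G))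

theorem apply_eq_mul_centralDisplacement (x : G) : u x = x * centralDisplacement hu x := by
  simp [centralDisplacement]

theorem pow_apply_eq_mul_iterBinomProd (k : ℕ) (x : G) :
    (u ^ k) x = x * iterBinomProd ((centralDisplacement hu).comp (Subgroup.center G).subtype) k
      (centralDisplacement hu x) := by
  induction k with
  | zero => simp [iterBinomProd]
  | succ k ih =>
    rw [iterBinomProd_succ, pow_succ', MulAut.mul_apply, ih, map_mul,
      apply_eq_mul_centralDisplacement hu x, apply_eq_mul_centralDisplacement hu (_ : G)]
    simp only [MonoidHom.coe_comp, Subgroup.coe_subtype, Function.comp_apply, Subgroup.coe_mul,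
      mul_assoc]

end CentralAutomorphisms

section DisplacementsIntoGroupP

variable {G : Type*} [Group G] {p : ℕ} {f : G →* Subgroup.center G}

theorem exists_pow_eq_iterate_of_forall_mem_groupP (hf : ∀ x, (f x : G) ∈ groupP p G)
    (i : ℕ) (x : G) :
    ∃ w, f w ^ (if p = 2 then 4 else p) ^ i = (f.comp (Subgroup.center G).subtype)^[i] (f x) := by
  induction i with
  | zero => exact ⟨x, pow_one _⟩
  | succ i ih =>
    obtain ⟨w, hw⟩ := ih
    obtain ⟨w', hw'⟩ := exists_apply_pow_eq_of_mem_groupP f (hf w)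
    refine ⟨w', ?_⟩
    rw [Function.iterate_succ_apply', ← hw, map_pow, MonoidHom.comp_apply, Subgroup.coe_subtype,
      ← hw', pow_succ', pow_mul]

theorem iterate_pow_choose_mem_range (hp : p.Prime) (hf : ∀ x, (f x : G) ∈ groupP p G) (n : ℕ)
    {i : ℕ} (hi : i ≠ 0) (x : G) :
    (f.comp (Subgroup.center G).subtype)^[i] (f x) ^ (p ^ n).choose (i + 1) ∈
      ((powMonoidHom (p ^ (n + 1))).comp f).range := by
  obtain ⟨w, hw⟩ := exists_pow_eq_iterate_of_forall_mem_groupP hf i x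
  obtain ⟨c, hc⟩ := pow_succ_dvd_pow_mul_choose hp n hi
  exact ⟨w ^ c, by simp only [MonoidHom.comp_apply, powMonoidHom_apply, map_pow, ← hw, ← pow_mul,
    hc, mul_comm]⟩

theorem exists_iterBinomProd_eq (hp : p.Prime) (hf : ∀ x, (f x : G) ∈ groupP p G) (n : ℕ)
    (x : G) : ∃ w, iterBinomProd (f.comp (Subgroup.center G).subtype) (p ^ n) (f x) =
      f x ^ p ^ n * f w ^ p ^ (n + 1) := by
  have hmem : ∏ i ∈ (Finset.range (p ^ n)).erase 0,
      (f.comp (Subgroup.center G).subtype)^[i] (f x) ^ (p ^ n).choose (i + 1) ∈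
        ((powMonoidHom (p ^ (n + 1))).comp f).range :=
    Subgroup.prod_mem _ fun i hi =>
      iterate_pow_choose_mem_range hp hf n (Finset.ne_of_mem_erase hi) x
  obtain ⟨w, hw⟩ := hmem
  refine ⟨w, ?_⟩
  rw [iterBinomProd, ← Finset.mul_prod_erase _ _ (Finset.mem_range.2 (pow_pos hp.pos n)), ← hw]
  simp

end DisplacementsIntoGroupP

theorem pow_prime_pow_eq_one_iff_of_mem_autSub {G : Type*} [Group G] [Finite G] {p : ℕ} (hp : p.Prime)
    (hG : IsPGroup p G) {u : G ≃* G} (hu : u ∈ autSub (Subgroup.center G ⊓ groupP p G)) (n : ℕ) :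
    u ^ p ^ n = 1 ↔ ∀ x, (x⁻¹ * u x) ^ p ^ n = 1 := by
  set f := centralDisplacement (autSub_mono inf_le_left hu)
  have hformula : ∀ x, ∃ w, (u ^ p ^ n) x = x * ↑(f x ^ p ^ n * f w ^ p ^ (n + 1)) := fun x => by
    obtain ⟨w, hw⟩ := exists_iterBinomProd_eq (f := f) hp (fun y => (hu y).2) n x
    exact ⟨w, by rw [pow_apply_eq_mul_iterBinomProd (autSub_mono inf_le_left hu), hw]⟩
  have hcoe : ∀ x, (x⁻¹ * u x) ^ p ^ n = ↑(f x ^ p ^ n) := fun x => rfl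
  simp only [hcoe, OneMemClass.coe_eq_one]
  constructor
  · intro h
    refine (hG.to_subgroup _).pow_eq_one_of_forall_exists_pow_mul_eq hp f (p ^ n) fun x => ?_
    obtain ⟨w, hw⟩ := hformula x
    rw [h, MulAut.one_apply, left_eq_mul, OneMemClass.coe_eq_one, mul_eq_one_iff_eq_inv,
      ← inv_pow, ← map_inv] at hw
    exact ⟨w⁻¹, by rw [hw, pow_succ]⟩
  · intro h
    ext x
    obtain ⟨w, hw⟩ := hformula x
    rw [hw, h, pow_succ, pow_mul, h, one_pow, one_mul]
    simp

theorem mem_autSub_map_ker_powMonoidHom_iff {G : Type*} [Group G] {u : G ≃* G}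
    (hu : u ∈ autSub (Subgroup.center G)) (k : ℕ) :
    u ∈ autSub ((powMonoidHom k : Subgroup.center G →* Subgroup.center G).ker.map
      (Subgroup.center G).subtype) ↔ ∀ x, (x⁻¹ * u x) ^ k = 1 := by
  refine forall_congr' fun x => ⟨?_, fun h => ⟨⟨_, hu x⟩, Subtype.ext h, rfl⟩⟩
  rintro ⟨c, hc, hcx⟩
  rw [← hcx]
  exact congrArg Subtype.val hc

theorem autSub_omega_eq_general (p : ℕ) (hp : p.Prime) (G : Type*) [Group G] [Finite G]
    (hG : IsPGroup p G) (n : ℕ) :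
    (∀ u : ↥(autSub (Subgroup.center G ⊓ groupP p G)),
      u ∈ Subgroup.closure {v : ↥(autSub (Subgroup.center G ⊓ groupP p G)) | v ^ p ^ n = 1} ↔
        u ^ p ^ n = 1) ∧
    (∀ u : G ≃* G,
      (u ∈ autSub (Subgroup.center G ⊓ groupP p G) ∧ u ^ p ^ n = 1) ↔
      (∀ x : G, x⁻¹ * u x ∈ Subgroup.center G ⊓ groupP p G ∧ (x⁻¹ * u x) ^ p ^ n = 1)) := by
  set S := Subgroup.center G ⊓ groupP p G
  have hchar : ∀ {u : G ≃* G}, u ∈ autSub S → (u ^ p ^ n = 1 ↔ ∀ x, (x⁻¹ * u x) ^ p ^ n = 1) :=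
    fun hu => pow_prime_pow_eq_one_iff_of_mem_autSub hp hG hu n
  -- `Ω_n(Z(G))` is encoded as the image of the kernel of the `p ^ n`-th power map of `Z(G)`.
  set Ω : Subgroup (autSub S) :=
    (autSub ((powMonoidHom (p ^ n) : Subgroup.center G →* Subgroup.center G).ker.map
      (Subgroup.center G).subtype)).subgroupOf (autSub S)
  have hΩ : ∀ v : autSub S, v ∈ Ω ↔ v ^ p ^ n = 1 := fun v => by
    rw [Subgroup.mem_subgroupOf, mem_autSub_map_ker_powMonoidHom_iff (autSub_mono inf_le_left v.2),
      ← hchar v.2, ← Subgroup.coe_pow, OneMemClass.coe_eq_one]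
  refine ⟨fun u => ?_, fun u => ?_⟩
  · rw [show {v : autSub S | v ^ p ^ n = 1} = Ω from Set.ext fun v => (hΩ v).symm,
      Subgroup.closure_eq, hΩ]
  · exact ⟨fun ⟨hu, h⟩ x => ⟨hu x, (hchar hu).1 h x⟩,
      fun h => ⟨fun x => (h x).1, (hchar fun x => (h x).1).2 fun x => (h x).2⟩⟩

/-- **Proposition 3.1(b).** Let `G` be a finite `p`-group and `S = Z(G) ∩ P(G)`. For every
`n ≥ 1`, the subgroup `Ω_n(Aut_S(G))` generated by the elements of order dividing `p ^ n`
coincides with the set of such elements, and both coincide with `Aut_{Ω_n(S)}(G)` where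
`Ω_n(S) = {z ∈ S | z ^ p ^ n = 1}`. -/
theorem autSub_omega_eq (p : ℕ) (hp : p.Prime) (G : Type*) [Group G] [Finite G]
    (hG : IsPGroup p G) (n : ℕ) (hn : 1 ≤ n) :
    (∀ u : ↥(autSub (Subgroup.center G ⊓ groupP p G)),
      u ∈ Subgroup.closure {v : ↥(autSub (Subgroup.center G ⊓ groupP p G)) | v ^ p ^ n = 1} ↔
        u ^ p ^ n = 1) ∧
    (∀ u : G ≃* G,
      (u ∈ autSub (Subgroup.center G ⊓ groupP p G) ∧ u ^ p ^ n = 1) ↔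
      (∀ x : G, x⁻¹ * u x ∈ Subgroup.center G ⊓ groupP p G ∧ (x⁻¹ * u x) ^ p ^ n = 1)) :=
  autSub_omega_eq_general p hp G hG n
end

section
/- Let p be a prime, G a finite p-group, and S = Z(G) ∩ P(G). Then the exponent of the group Aut_S(G) is at most p^{min{r,s}}, where exp(G/[G,G]) = p^r and exp(Z(G)) = p^s. -/
/-! Write `u x = x * ψ x` with `ψ : G →* Z(G)` taking values in `P(G)`, and let `α` be the
restriction of `ψ` to `Z(G)`. Then `u ^ n` sends `x` to `x * ∏_{k < n} α^k (ψ x) ^ C(n, k+1)`.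
The values of `ψ` have order dividing `p ^ m`, `m = min r s`, because `ψ` lands in `Z(G)` and
kills `[G, G]`. A homomorphism into an abelian group kills commutators and sends the generating
`p`-th (resp. `4`-th) powers to `p`-th powers, so on `P(G)` its order bound drops by a factor `p`;
hence `α^k (ψ x)` has order dividing `p ^ (m - k)`, which divides `C(p ^ m, k + 1)`, and
`u ^ p ^ m = 1`. -/

open Finset
open scoped IsMulCommutative

theorem Nat.pow_sub_dvd_choose_prime_pow {p : ℕ} (hp : p.Prime) (m k : ℕ) :
    p ^ (m - k) ∣ (p ^ m).choose (k + 1) := by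
  rcases lt_or_ge (p ^ m) (k + 1) with hlt | hle
  · simp [Nat.choose_eq_zero_of_lt hlt]
  have hv : (k + 1).factorization p ≤ k :=
    Nat.lt_succ_iff.1 <| (Nat.lt_pow_self hp.one_lt).trans_le (Nat.ordProj_le p k.succ_ne_zero)
  calc p ^ (m - k) ∣ p ^ (m - (k + 1).factorization p) := pow_dvd_pow p (by omega)
    _ = p ^ ((p ^ m).choose (k + 1)).factorization p := by
      rw [Nat.factorization_choose_prime_pow hp hle k.succ_ne_zero]
    _ ∣ (p ^ m).choose (k + 1) := Nat.ordProj_dvd _ _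

/-- Pascal's rule, written multiplicatively along a sequence. -/
theorem Finset.mul_prod_range_pow_choose_succ {A : Type*} [CommMonoid A] (b : ℕ → A) (n : ℕ) :
    b 0 * ∏ k ∈ range n, (b k * b (k + 1)) ^ n.choose (k + 1) =
      ∏ k ∈ range (n + 1), b k ^ (n + 1).choose (k + 1) := by
  simp only [Nat.choose_succ_succ, pow_add, prod_mul_distrib, mul_pow]
  rw [prod_range_succ' (fun k => b k ^ n.choose k),
    prod_range_succ (fun k => b k ^ n.choose (k + 1))]
  simp only [Nat.choose_zero_right, pow_one, Nat.choose_succ_self, pow_zero, mul_one]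
  ac_rfl

section

variable {G : Type*} [Group G]

theorem map_pow_exponent_commutator_eq_one {A : Type*} [CommGroup A] (ψ : G →* A) (x : G) :
    ψ x ^ Monoid.exponent (G ⧸ commutator G) = 1 := by
  rw [← map_pow, ← MonoidHom.mem_ker]
  refine Abelianization.commutator_subset_ker ψ ((QuotientGroup.eq_one_iff _).1 ?_)
  rw [QuotientGroup.mk_pow]
  exact Monoid.pow_exponent_eq_one _

theorem map_pow_pred_eq_one_of_mem_groupP {A : Type*} [CommGroup A] (p : ℕ) (χ : G →* A) {c : ℕ}
    (h : ∀ g, χ g ^ p ^ c = 1) {y : G} (hy : y ∈ groupP p G) : χ y ^ p ^ (c - 1) = 1 := by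
  suffices groupP p G ≤ ((powMonoidHom (p ^ (c - 1))).comp χ).ker from this hy
  refine sup_le (Abelianization.commutator_subset_ker _) ((Subgroup.closure_le _).2 ?_)
  rintro _ ⟨g, rfl⟩
  have hp : p ∣ if p = 2 then 4 else p := by
    split_ifs with h2
    · exact h2 ▸ ⟨2, rfl⟩
    · exact dvd_rfl
  obtain ⟨d, hd⟩ : p ^ c ∣ (if p = 2 then 4 else p) * p ^ (c - 1) :=
    calc p ^ c ∣ p ^ (c - 1 + 1) := pow_dvd_pow p (by omega)
      _ = p * p ^ (c - 1) := pow_succ' p _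
      _ ∣ _ := mul_dvd_mul_right hp _
  rw [SetLike.mem_coe, MonoidHom.mem_ker, MonoidHom.comp_apply, powMonoidHom_apply, map_pow,
    ← pow_mul, hd, pow_mul, h, one_pow]

theorem iterate_map_pow_sub_eq_one {A : Type*} [CommGroup A] (p : ℕ) (ψ : G →* A) (ι : A →* G)
    (hP : ∀ x, ι (ψ x) ∈ groupP p G) {c : ℕ} (h : ∀ x, ψ x ^ p ^ c = 1) (k : ℕ) (x : G) :
    (⇑(ψ.comp ι))^[k] (ψ x) ^ p ^ (c - k) = 1 := by
  induction k generalizing x with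
  | zero => exact h x
  | succ k ih =>
    let α : Monoid.End A := ψ.comp ι
    let χ : G →* A := MonoidHom.comp (α ^ k) ψ
    have hχ : ∀ y, χ y = (⇑(ψ.comp ι))^[k] (ψ y) := fun y => rfl
    rw [Function.iterate_succ_apply, MonoidHom.comp_apply, Nat.sub_succ', ← hχ]
    exact map_pow_pred_eq_one_of_mem_groupP p χ (fun y => hχ y ▸ ih y) (hP x)

def MonoidHom.centralDeviation (u : G →* G) (hu : ∀ x, x⁻¹ * u x ∈ Subgroup.center G) :
    G →* Subgroup.center G where
  toFun x := ⟨x⁻¹ * u x, hu x⟩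
  map_one' := by simp
  map_mul' a b := Subtype.ext <| by
    have h := Subgroup.mem_center_iff.1 (hu a) b⁻¹
    calc (a * b)⁻¹ * u (a * b) = b⁻¹ * (a⁻¹ * u a) * u b := by rw [map_mul]; group
      _ = a⁻¹ * u a * (b⁻¹ * u b) := by rw [h]; group

theorem MonoidHom.mul_centralDeviation (u : G →* G) (hu : ∀ x, x⁻¹ * u x ∈ Subgroup.center G)
    (x : G) : x * u.centralDeviation hu x = u x :=
  mul_inv_cancel_left x (u x)

theorem MulAut.pow_apply_eq_mul_prod (u : MulAut G) (ψ : G →* Subgroup.center G)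
    (hu : ∀ x, u x = x * ψ x) (n : ℕ) (x : G) :
    (u ^ n) x = x * ↑(∏ k ∈ range n,
      (⇑(ψ.comp (Subgroup.center G).subtype))^[k] (ψ x) ^ n.choose (k + 1)) := by
  induction n generalizing x with
  | zero => simp
  | succ n ih =>
    have hψu : ψ (u x) = ψ x * ψ.comp (Subgroup.center G).subtype (ψ x) := by
      rw [hu, map_mul]; rfl
    rw [pow_succ, MulAut.mul_apply, ih, hψu, hu, mul_assoc, ← Subgroup.coe_mul]
    simp only [iterate_map_mul, ← Function.iterate_succ_apply]
    exact congrArg (x * ·) <| congrArg Subtype.val <|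
      mul_prod_range_pow_choose_succ (fun k => (⇑(ψ.comp (Subgroup.center G).subtype))^[k] (ψ x)) n

end

theorem autSub_exponent_le_general (p r s : ℕ) (hp : p.Prime) (G : Type*) [Group G]
    (hr : Monoid.exponent (G ⧸ commutator G) = p ^ r)
    (hs : Monoid.exponent ↥(Subgroup.center G) = p ^ s) :
    Monoid.exponent ↥(autSub (Subgroup.center G ⊓ groupP p G)) ≤ p ^ min r s := by
  refine Nat.le_of_dvd (pow_pos hp.pos _) (Monoid.exponent_dvd_of_forall_pow_eq_one fun u => ?_)
  have hu : ∀ x, x⁻¹ * u.1 x ∈ Subgroup.center G ⊓ groupP p G := u.2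
  let ψ := u.1.toMonoidHom.centralDeviation fun x => (Subgroup.mem_inf.1 (hu x)).1
  have hψP : ∀ x, (ψ x : G) ∈ groupP p G := fun x => (Subgroup.mem_inf.1 (hu x)).2
  have hψ_pow : ∀ x, ψ x ^ p ^ min r s = 1 := fun x => by
    have h_r : ψ x ^ p ^ r = 1 := hr ▸ map_pow_exponent_commutator_eq_one ψ x
    have h_s : ψ x ^ p ^ s = 1 := hs ▸ Monoid.pow_exponent_eq_one (ψ x)
    rcases le_total r s with h | h
    · rwa [min_eq_left h]
    · rwa [min_eq_right h]
  ext x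
  rw [Subgroup.coe_pow, MulAut.pow_apply_eq_mul_prod u.1 ψ
    (fun x => (u.1.toMonoidHom.mul_centralDeviation _ x).symm), prod_eq_one fun k _ => ?_,
    OneMemClass.coe_one, mul_one, Subgroup.coe_one, MulAut.one_apply]
  obtain ⟨d, hd⟩ := Nat.pow_sub_dvd_choose_prime_pow hp (min r s) k
  rw [hd, pow_mul, iterate_map_pow_sub_eq_one p ψ (Subgroup.center G).subtype hψP hψ_pow k x,
    one_pow]

/-- **Proposition 3.1(c).** Let `G` be a finite `p`-group and `S = Z(G) ∩ P(G)`. Then the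
exponent of `Aut_S(G)` is at most `p ^ min r s`, where `exp(G/[G,G]) = p ^ r` and
`exp(Z(G)) = p ^ s`. -/
theorem autSub_exponent_le (p r s : ℕ) (hp : p.Prime) (G : Type*) [Group G] [Finite G]
    (hG : IsPGroup p G)
    (hr : Monoid.exponent (G ⧸ commutator G) = p ^ r)
    (hs : Monoid.exponent ↥(Subgroup.center G) = p ^ s) :
    Monoid.exponent ↥(autSub (Subgroup.center G ⊓ groupP p G)) ≤ p ^ min r s :=
  autSub_exponent_le_general p r s hp G hr hs
end

section
/- Let p be a prime, G a finite p-group, and S = Z(G) ∩ P(G). Then the group Aut_S(G) is nilpotent of class at most min{r,s}, where exp(G/[G,G]) = p^r and exp(Z(G)) = p^s. -/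
/-!
For `u ∈ Aut_S(G)` the deviation `x ↦ x⁻¹ u x` is a homomorphism `G → S` killing `[G, G]`, so its
values have order dividing both `p ^ r` and `p ^ s`, i.e. they lie in `Ω_k(S)` with `k = min r s`.
Filter `S` by `L_i = Ω_k(S)^(p^i)`, so `L_k = 1`. Since `S ≤ P(G)`, a deviation with values in
`L_i` maps `S` into `L_(i+1)`, and one with values in `L_0` maps each `L_j` into `L_(j+1)`. The
deviation of `⁅u, v⁆` is a product of a deviation of `v` evaluated on values of `u` and vice
versa, so the subgroups `Aut_(L_i)(G) ∩ Aut_S(G)` form a descending central series of `Aut_S(G)`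
reaching `1` at step `k`.
-/

section

open Subgroup
open scoped commutatorElement

variable {G : Type*} [Group G]

theorem groupP_le {p : ℕ} {K : Subgroup G} (hc : commutator G ≤ K) (hp : ∀ g : G, g ^ p ∈ K) :
    groupP p G ≤ K := by
  refine sup_le hc (closure_le _ |>.mpr ?_)
  rintro _ ⟨g, rfl⟩
  obtain ⟨q, hq⟩ : p ∣ if p = 2 then 4 else p := by
    split_ifs with h
    · exact ⟨2, by omega⟩
    · exact dvd_rfl
  rw [hq, pow_mul]
  exact K.pow_mem (hp g) q

section powLayer

variable {S : Subgroup G} {n : ℕ}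

/-- For central `S` this is `Ω_n(S)^m`, where `Ω_n(S) = {z ∈ S | z ^ n = 1}`. -/
def powLayer (S : Subgroup G) (n m : ℕ) : Subgroup G :=
  closure {x | ∃ z ∈ S, z ^ n = 1 ∧ z ^ m = x}

theorem powLayer_le (m : ℕ) : powLayer S n m ≤ S :=
  closure_le _ |>.mpr <| by
    rintro _ ⟨z, hz, -, rfl⟩
    exact S.pow_mem hz _

theorem mem_powLayer_one {z : G} (hz : z ∈ S) (hzn : z ^ n = 1) : z ∈ powLayer S n 1 :=
  subset_closure ⟨z, hz, hzn, pow_one z⟩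

theorem pow_mem_powLayer (hS : S ≤ center G) {a : ℕ} {x : G} (hx : x ∈ powLayer S n a) (b : ℕ) :
    x ^ b ∈ powLayer S n (a * b) := by
  induction hx using closure_induction with
  | mem _ hx =>
    obtain ⟨z, hz, hzn, rfl⟩ := hx
    exact subset_closure ⟨z, hz, hzn, pow_mul z a b⟩
  | one => simp
  | mul x y hx _ hxb hyb =>
    have hxy : Commute y x := mem_center_iff.mp (hS (powLayer_le a hx)) y
    rw [hxy.symm.mul_pow]
    exact mul_mem hxb hyb
  | inv x _ hxb =>
    rw [inv_pow]
    exact inv_mem hxb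

theorem powLayer_self : powLayer S n n = ⊥ :=
  eq_bot_iff.mpr <| closure_le _ |>.mpr <| by
    rintro _ ⟨z, -, hzn, rfl⟩
    exact hzn

end powLayer

def deviationHom (f : G →* G) (hf : ∀ x, x⁻¹ * f x ∈ center G) : G →* G where
  toFun x := x⁻¹ * f x
  map_one' := by simp
  map_mul' x y := by
    calc (x * y)⁻¹ * f (x * y) = y⁻¹ * (x⁻¹ * f x) * f y := by rw [map_mul]; group
      _ = (x⁻¹ * f x) * (y⁻¹ * f y) := by rw [mem_center_iff.mp (hf x) y⁻¹]; group

@[simp]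
theorem deviationHom_apply (f : G →* G) (hf : ∀ x, x⁻¹ * f x ∈ center G) (x : G) :
    deviationHom f hf x = x⁻¹ * f x :=
  rfl

open scoped IsMulCommutative in
theorem commutator_le_ker_deviationHom (f : G →* G) (hf : ∀ x, x⁻¹ * f x ∈ center G) :
    commutator G ≤ (deviationHom f hf).ker := by
  intro x hx
  exact congrArg Subtype.val <|
    Abelianization.commutator_subset_ker ((deviationHom f hf).codRestrict (center G) hf) hx

theorem pow_exponent_mem_commutator (x : G) :
    x ^ Monoid.exponent (G ⧸ commutator G) ∈ commutator G := by
  rw [← QuotientGroup.eq_one_iff, QuotientGroup.mk_pow]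
  exact Monoid.pow_exponent_eq_one _

theorem deviation_pow_exponent_eq_one (f : G →* G) (hf : ∀ x, x⁻¹ * f x ∈ center G) (x : G) :
    (x⁻¹ * f x) ^ Monoid.exponent (G ⧸ commutator G) = 1 := by
  rw [← deviationHom_apply f hf, ← map_pow]
  exact commutator_le_ker_deviationHom f hf (pow_exponent_mem_commutator x)

section layers

variable {p n : ℕ} {S : Subgroup G}

theorem deviation_mem_powLayer_of_mem_groupP (hS : S ≤ center G) {m : ℕ} {f : G →* G}
    (hf : ∀ x, x⁻¹ * f x ∈ powLayer S n m) {z : G} (hz : z ∈ groupP p G) :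
    z⁻¹ * f z ∈ powLayer S n (m * p) := by
  have hfc : ∀ x, x⁻¹ * f x ∈ center G := fun x => hS (powLayer_le m (hf x))
  suffices groupP p G ≤ (powLayer S n (m * p)).comap (deviationHom f hfc) from this hz
  refine groupP_le ((commutator_le_ker_deviationHom f hfc).trans ?_) fun g => ?_
  · exact MonoidHom.ker_le_comap _ _
  · rw [mem_comap, map_pow]
    exact pow_mem_powLayer hS (hf g) p

theorem deviation_mem_powLayer_of_mem_powLayer (hS : S ≤ center G) (hSP : S ≤ groupP p G)
    {f : G →* G} (hf : ∀ x, x⁻¹ * f x ∈ powLayer S n 1) {m : ℕ} {t : G}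
    (ht : t ∈ powLayer S n m) :
    t⁻¹ * f t ∈ powLayer S n (p * m) := by
  have hfc : ∀ x, x⁻¹ * f x ∈ center G := fun x => hS (powLayer_le 1 (hf x))
  suffices powLayer S n m ≤ (powLayer S n (p * m)).comap (deviationHom f hfc) from this ht
  refine closure_le _ |>.mpr ?_
  rintro _ ⟨z, hz, -, rfl⟩
  have hfz := deviation_mem_powLayer_of_mem_groupP hS hf (hSP hz)
  rw [one_mul] at hfz
  simpa only [SetLike.mem_coe, mem_comap, map_pow, deviationHom_apply] using
    pow_mem_powLayer hS hfz m

end layers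

theorem deviation_commutator_eq {u v : G ≃* G} (hu : ∀ x, x⁻¹ * u x ∈ center G) (x : G) :
    (v (u x))⁻¹ * ⁅u, v⁆ (v (u x)) =
      ((x⁻¹ * u x)⁻¹ * v (x⁻¹ * u x))⁻¹ * ((x⁻¹ * v x)⁻¹ * u (x⁻¹ * v x)) := by
  have hcomm : ⁅u, v⁆ (v (u x)) = u (v x) := by
    simp only [commutatorElement_def, MulAut.mul_apply, MulAut.inv_apply_self]
  rw [hcomm]
  set t := x⁻¹ * u x with ht
  set s := x⁻¹ * v x with hs
  have hts : s⁻¹ * t = t * s⁻¹ := mem_center_iff.mp (hu x) s⁻¹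
  have hux : u x = x * t := by rw [ht]; group
  have hvx : v x = x * s := by rw [hs]; group
  have hvu : v (u x) = x * s * v t := by rw [hux, map_mul, hvx]
  have huv : u (v x) = x * t * u s := by rw [hvx, map_mul, hux]
  rw [hvu, huv]
  calc (x * s * v t)⁻¹ * (x * t * u s)
      = (v t)⁻¹ * (s⁻¹ * t) * u s := by group
    _ = (t⁻¹ * v t)⁻¹ * (s⁻¹ * u s) := by rw [hts]; group

theorem commutator_mem_autSub {M N K : Subgroup G} (hM : M ≤ center G) {u v : G ≃* G}
    (hu : u ∈ autSub M) (hv : v ∈ autSub N) (hvM : ∀ t ∈ M, t⁻¹ * v t ∈ K)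
    (huN : ∀ s ∈ N, s⁻¹ * u s ∈ K) :
    ⁅u, v⁆ ∈ autSub K := by
  intro y
  obtain ⟨x, rfl⟩ : ∃ x, v (u x) = y := ⟨u⁻¹ (v⁻¹ y), by simp⟩
  rw [deviation_commutator_eq fun x => hM (hu x)]
  exact K.mul_mem (K.inv_mem (hvM _ (hu x))) (huN _ (hv x))

theorem autSub_bot : autSub (⊥ : Subgroup G) = ⊥ := by
  refine eq_bot_iff.mpr fun u hu => ?_
  ext x
  exact (inv_mul_eq_one.mp (hu x)).symm

section series

variable {p k : ℕ} {S : Subgroup G}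

theorem isDescendingCentralSeries_autSub_powLayer (hS : S ≤ center G) (hSP : S ≤ groupP p G)
    (hk : ∀ u ∈ autSub S, ∀ x, (x⁻¹ * u x) ^ p ^ k = 1) :
    Subgroup.IsDescendingCentralSeries fun i ↦
      (autSub (powLayer S (p ^ k) (p ^ i))).comap (autSub S).subtype := by
  refine ⟨eq_top_iff.mpr fun ⟨u, hu⟩ _ x => ?_, fun ⟨u, hu⟩ i hui ⟨v, hv⟩ => ?_⟩
  · exact mem_powLayer_one (hu x) (hk u hu x)
  · have hv₁ : v ∈ autSub (powLayer S (p ^ k) 1) := fun x => mem_powLayer_one (hv x) (hk v hv x)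
    refine commutator_mem_autSub (fun _ ht => hS (powLayer_le _ ht)) hui hv (fun t ht => ?_)
      (fun s hs => ?_)
    · rw [pow_succ']
      exact deviation_mem_powLayer_of_mem_powLayer hS hSP (f := v.toMonoidHom) hv₁ ht
    · rw [pow_succ]
      exact deviation_mem_powLayer_of_mem_groupP hS (f := u.toMonoidHom) hui (hSP hs)

theorem lowerCentralSeries_autSub_eq_bot (hS : S ≤ center G) (hSP : S ≤ groupP p G)
    (hk : ∀ u ∈ autSub S, ∀ x, (x⁻¹ * u x) ^ p ^ k = 1) :
    (⊤ : Subgroup (autSub S)).lowerCentralSeries k = ⊥ := by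
  refine eq_bot_iff.mpr <| (Subgroup.descending_central_series_ge_lower _
    (isDescendingCentralSeries_autSub_powLayer hS hSP hk) k).trans fun u hu => ?_
  rw [mem_comap, powLayer_self, autSub_bot, mem_bot] at hu
  exact mem_bot.mpr (Subtype.ext hu)

end series

end

theorem autSub_nilpotent_general (p r s : ℕ) (G : Type*) [Group G]
    (hr : Monoid.exponent (G ⧸ commutator G) = p ^ r)
    (hs : Monoid.exponent ↥(Subgroup.center G) = p ^ s) :
    (⊤ : Subgroup ↥(autSub (Subgroup.center G ⊓ groupP p G))).lowerCentralSeries (min r s) = ⊥ := by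
  refine lowerCentralSeries_autSub_eq_bot inf_le_left inf_le_right fun u hu x => ?_
  have hcentral : ∀ y, y⁻¹ * u y ∈ Subgroup.center G := fun y => (hu y).1
  have hpow_r : (x⁻¹ * u x) ^ p ^ r = 1 := by
    rw [← hr]
    exact deviation_pow_exponent_eq_one u.toMonoidHom hcentral x
  have hpow_s : (x⁻¹ * u x) ^ p ^ s = 1 := by
    rw [← hs]
    exact congrArg Subtype.val (Monoid.pow_exponent_eq_one (⟨_, hcentral x⟩ : Subgroup.center G))
  rcases le_total r s with h | h
  · rwa [min_eq_left h]
  · rwa [min_eq_right h]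

/-- **Proposition 3.1(d).** Let `G` be a finite `p`-group and `S = Z(G) ∩ P(G)`. Then `Aut_S(G)`
is nilpotent of class at most `min r s`, where `exp(G/[G,G]) = p ^ r` and `exp(Z(G)) = p ^ s`. -/
theorem autSub_nilpotent (p r s : ℕ) (hp : p.Prime) (G : Type*) [Group G] [Finite G]
    (hG : IsPGroup p G)
    (hr : Monoid.exponent (G ⧸ commutator G) = p ^ r)
    (hs : Monoid.exponent ↥(Subgroup.center G) = p ^ s) :
    (⊤ : Subgroup ↥(autSub (Subgroup.center G ⊓ groupP p G))).lowerCentralSeries (min r s) = ⊥ :=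
  autSub_nilpotent_general p r s G hr hs
end

section
/- Let p be a prime and G a finite p-group such that Z(G) ≤ Φ(G), the Frattini subgroup of G. Then Aut_{Z(G)}(G) is nilpotent of class at most min{r,s}, where exp(G/[G,G]) = p^r and exp(Z(G)) = p^s. -/
open Subgroup

theorem Submodule.exists_isCoatom_notMem {K V : Type*} [DivisionRing K] [AddCommGroup V]
    [Module K V] {v : V} (hv : v ≠ 0) : ∃ W : Submodule K V, IsCoatom W ∧ v ∉ W := by
  obtain ⟨W, hW⟩ := (span K {v}).exists_isCompl
  refine ⟨W, hW.isAtom_iff_isCoatom.mp (nonzero_span_atom v hv), fun hvW => hv ?_⟩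
  exact (Submodule.mem_bot K).mp (hW.inf_eq_bot ▸ mem_inf.mpr ⟨mem_span_singleton_self v, hvW⟩)

theorem frattini_eq_bot_of_pow_eq_one {p : ℕ} [Fact p.Prime] {Q : Type*} [CommGroup Q]
    (hQ : ∀ y : Q, y ^ p = 1) : frattini Q = ⊥ := by
  have _ : Module (ZMod p) (Additive Q) :=
    AddCommGroup.zmodModule fun y => congrArg Additive.ofMul (hQ y.toMul)
  refine eq_bot_iff.mpr fun x hx => ?_
  by_contra hx1
  obtain ⟨W, hW, hxW⟩ := Submodule.exists_isCoatom_notMem (K := ZMod p) (v := Additive.ofMul x) hx1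
  have hM : IsCoatom (toAddSubgroup.symm ((AddSubgroup.toZModSubmodule p).symm W)) := by
    rwa [OrderIso.isCoatom_iff, OrderIso.isCoatom_iff]
  exact hxW (frattini_le_coatom hM hx)

theorem MonoidHom.exists_pow_eq_of_mem_frattini {p : ℕ} [Fact p.Prime] {G H : Type*} [Group G]
    [CommGroup H] (f : G →* H) {z : G} (hz : z ∈ frattini G) : ∃ x, f x ^ p = f z := by
  let P := (powMonoidHom p : f.range →* f.range).range
  let φ := (QuotientGroup.mk' P).comp f.rangeRestrict
  have hφ : Function.Surjective φ :=
    (QuotientGroup.mk'_surjective P).comp f.rangeRestrict_surjective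
  have hexp : ∀ y : f.range ⧸ P, y ^ p = 1 := by
    rintro ⟨y⟩
    exact (QuotientGroup.eq_one_iff _).mpr ⟨y, rfl⟩
  have hzφ := frattini_le_comap_frattini_of_surjective hφ hz
  rw [mem_comap, frattini_eq_bot_of_pow_eq_one hexp, mem_bot, MonoidHom.comp_apply,
    QuotientGroup.mk'_apply, QuotientGroup.eq_one_iff] at hzφ
  obtain ⟨⟨_, x, rfl⟩, hx⟩ := hzφ
  exact ⟨x, congrArg Subtype.val hx⟩

theorem pow_exponent_quotient_mem {G : Type*} [Group G] (N : Subgroup G) [N.Normal] (x : G) :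
    x ^ Monoid.exponent (G ⧸ N) ∈ N := by
  rw [← QuotientGroup.eq_one_iff, QuotientGroup.mk_pow]
  exact Monoid.pow_exponent_eq_one _

open scoped commutatorElement

section CentralAutomorphism

variable {G : Type*} [Group G]

instance Subgroup.center.commGroup : CommGroup (center G) where
  mul_comm a b := Subtype.ext (mem_center_iff.mp b.2 a)

theorem commutatorElement_mem_autSub {N : Subgroup G} {a b : G ≃* G}
    (h : ∀ y, (b (a y))⁻¹ * a (b y) ∈ N) : ⁅a, b⁆ ∈ autSub N := by
  intro x
  obtain ⟨y, rfl⟩ : ∃ y, b (a y) = x := ⟨a⁻¹ (b⁻¹ x), by simp [MulAut.inv_def]⟩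
  simpa [commutatorElement_def, MulAut.mul_apply, MulAut.inv_def] using h y

def centralHom (u : autSub (center G)) : G →* center G where
  toFun x := ⟨x⁻¹ * (u : G ≃* G) x, u.2 x⟩
  map_one' := by ext; simp
  map_mul' x y := by
    ext
    have hux : (x⁻¹ * (u : G ≃* G) x) * y⁻¹ = y⁻¹ * (x⁻¹ * (u : G ≃* G) x) :=
      (mem_center_iff.mp (u.2 x) y⁻¹).symm
    simp only [map_mul, mul_inv_rev, coe_mul]
    calc y⁻¹ * x⁻¹ * ((u : G ≃* G) x * (u : G ≃* G) y)
        = y⁻¹ * (x⁻¹ * (u : G ≃* G) x) * (u : G ≃* G) y := by group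
      _ = x⁻¹ * (u : G ≃* G) x * (y⁻¹ * (u : G ≃* G) y) := by rw [← hux]; group

theorem coe_centralHom (u : autSub (center G)) (x : G) :
    (centralHom u x : G) = x⁻¹ * (u : G ≃* G) x := rfl

theorem apply_eq_mul_centralHom (u : autSub (center G)) (x : G) :
    (u : G ≃* G) x = x * centralHom u x := by
  rw [coe_centralHom, mul_inv_cancel_left]

theorem apply_apply_eq_mul_centralHom (a b : autSub (center G)) (y : G) :
    (b : G ≃* G) ((a : G ≃* G) y) =
      y * (centralHom a y * centralHom b y * centralHom b (centralHom a y) : center G) := by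
  have hcomm : (centralHom a y : G) * centralHom b y = centralHom b y * centralHom a y :=
    mem_center_iff.mp (centralHom b y).2 _
  rw [apply_eq_mul_centralHom a y, map_mul, apply_eq_mul_centralHom b y,
    apply_eq_mul_centralHom b (centralHom a y : G)]
  simp only [coe_mul, mul_assoc]
  rw [← mul_assoc (centralHom b y : G), ← hcomm, mul_assoc]

theorem inv_apply_mul_apply_eq_centralHom (a b : autSub (center G)) (y : G) :
    ((b : G ≃* G) ((a : G ≃* G) y))⁻¹ * (a : G ≃* G) ((b : G ≃* G) y) =
      ((centralHom b (centralHom a y))⁻¹ * centralHom a (centralHom b y) : center G) := by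
  rw [apply_apply_eq_mul_centralHom, apply_apply_eq_mul_centralHom,
    mul_comm (centralHom b y) (centralHom a y)]
  simp only [coe_mul, coe_inv]
  group

end CentralAutomorphism

section Filtration

variable {G : Type*} [Group G] {p : ℕ} [Fact p.Prime]

theorem exists_centralHom_pow_eq (hZ : center G ≤ frattini G) (u : autSub (center G))
    (z : center G) : ∃ x, centralHom u x ^ p = centralHom u z :=
  (centralHom u).exists_pow_eq_of_mem_frattini (hZ z.2)

theorem centralHom_mem_map_pow_succ_of_mem (hZ : center G ≤ frattini G)
    {W : Subgroup (center G)} (hW : ∀ u x, centralHom u x ∈ W) (u : autSub (center G)) {k : ℕ}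
    {z : center G} (hz : z ∈ W.map (powMonoidHom (p ^ k))) :
    centralHom u z ∈ W.map (powMonoidHom (p ^ (k + 1))) := by
  obtain ⟨w, -, rfl⟩ := hz
  obtain ⟨x, hx⟩ := exists_centralHom_pow_eq (p := p) hZ u w
  refine ⟨centralHom u x, hW u x, ?_⟩
  rw [powMonoidHom_apply, powMonoidHom_apply, coe_pow, map_pow, ← hx, ← pow_mul, pow_succ']

theorem centralHom_center_mem_map_pow_succ (hZ : center G ≤ frattini G)
    {W : Subgroup (center G)} {k : ℕ} {a : autSub (center G)}
    (ha : ∀ x, centralHom a x ∈ W.map (powMonoidHom (p ^ k))) (z : center G) :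
    centralHom a z ∈ W.map (powMonoidHom (p ^ (k + 1))) := by
  obtain ⟨x, hx⟩ := exists_centralHom_pow_eq (p := p) hZ a z
  obtain ⟨w, hw, hwx⟩ := ha x
  refine ⟨w, hw, ?_⟩
  rw [powMonoidHom_apply] at hwx ⊢
  rw [← hx, ← hwx, ← pow_mul, pow_succ]

theorem coe_mem_autSub_map_subtype_iff {u : autSub (center G)} {Y : Subgroup (center G)} :
    (u : G ≃* G) ∈ autSub (Y.map (center G).subtype) ↔ ∀ x, centralHom u x ∈ Y :=
  forall_congr' fun x => mem_map_iff_mem (subtype_injective _) (x := centralHom u x)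

theorem lowerCentralSeries_le_autSub_map_pow (hZ : center G ≤ frattini G)
    {W : Subgroup (center G)} (hW : ∀ u x, centralHom u x ∈ W) (k : ℕ) :
    (⊤ : Subgroup (autSub (center G))).lowerCentralSeries k ≤
      (autSub ((W.map (powMonoidHom (p ^ k))).map (center G).subtype)).subgroupOf
        (autSub (center G)) := by
  induction k with
  | zero =>
    intro u _
    rw [mem_subgroupOf, coe_mem_autSub_map_subtype_iff]
    exact fun x => ⟨centralHom u x, hW u x, pow_one _⟩
  | succ k ih =>
    rw [Subgroup.lowerCentralSeries_succ, commutator_le]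
    intro a ha b _
    have ha' : ∀ x, centralHom a x ∈ W.map (powMonoidHom (p ^ k)) :=
      coe_mem_autSub_map_subtype_iff.mp (ih ha)
    refine commutatorElement_mem_autSub fun y => ?_
    rw [inv_apply_mul_apply_eq_centralHom]
    exact ⟨_, mul_mem (inv_mem (centralHom_mem_map_pow_succ_of_mem hZ hW b (ha' y)))
      (centralHom_center_mem_map_pow_succ hZ ha' _), rfl⟩

theorem lowerCentralSeries_autSub_center_eq_bot (hZ : center G ≤ frattini G) {n : ℕ}
    (hn : ∀ (u : autSub (center G)) (x : G), centralHom u x ^ p ^ n = 1) :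
    (⊤ : Subgroup (autSub (center G))).lowerCentralSeries n = ⊥ := by
  have hW : ∀ u x, centralHom u x ∈ (powMonoidHom (p ^ n) : center G →* center G).ker := hn
  have hker : (powMonoidHom (p ^ n) : center G →* center G).ker.map (powMonoidHom (p ^ n)) = ⊥ :=
    eq_bot_iff.mpr fun _ ⟨_, hw, hz⟩ => hz ▸ hw
  refine eq_bot_iff.mpr ((lowerCentralSeries_le_autSub_map_pow (p := p) hZ hW n).trans ?_)
  rw [hker, Subgroup.map_bot, autSub_bot, bot_subgroupOf]

end Filtration

theorem autSub_center_nilpotent_general (p r s : ℕ) (hp : p.Prime) (G : Type*) [Group G]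
    (hZ : Subgroup.center G ≤ frattini G)
    (hr : Monoid.exponent (G ⧸ commutator G) = p ^ r)
    (hs : Monoid.exponent ↥(Subgroup.center G) = p ^ s) :
    (⊤ : Subgroup ↥(autSub (Subgroup.center G))).lowerCentralSeries (min r s) = ⊥ := by
  have := Fact.mk hp
  obtain h | h := min_choice r s <;> rw [h] <;>
    refine lowerCentralSeries_autSub_center_eq_bot (p := p) hZ fun u x => ?_
  · rw [← map_pow, ← hr]
    exact Abelianization.commutator_subset_ker (centralHom u) (pow_exponent_quotient_mem _ x)
  · exact hs ▸ Monoid.pow_exponent_eq_one _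

/-- **Corollary 3.2.** If `G` is a finite `p`-group with `Z(G) ≤ Φ(G)`, then `Aut_{Z(G)}(G)` is
nilpotent of class at most `min r s`, where `exp(G/[G,G]) = p ^ r` and `exp(Z(G)) = p ^ s`. -/
theorem autSub_center_nilpotent (p r s : ℕ) (hp : p.Prime) (G : Type*) [Group G] [Finite G]
    (hG : IsPGroup p G)
    (hZ : Subgroup.center G ≤ frattini G)
    (hr : Monoid.exponent (G ⧸ commutator G) = p ^ r)
    (hs : Monoid.exponent ↥(Subgroup.center G) = p ^ s) :
    (⊤ : Subgroup ↥(autSub (Subgroup.center G))).lowerCentralSeries (min r s) = ⊥ :=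
  autSub_center_nilpotent_general p r s hp G hZ hr hs
end
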